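/- arXiv:2408.06923 — 7 statements merged into one kernel-verified Lean document; each statement's English description precedes it below -/
import Mathlib

section
/- Each equivalence class of the relation ∼ on S (where g ∼ h means h = C^j(g) for some integer j) is finite. -/
/-- An area vector: `g i.succ ≤ g i.castSucc + m` for all consecutive indices. -/
def IsAreaVec {n : ℕ} (m : ℝ) (g : Fin (n + 1) → ℝ) : Prop :=
  ∀ i : Fin n, g i.succ ≤ g i.castSucc + m

/-- The cycling operator `C(g₀,…,g_{n-1}) = (g₁,…,g_{n-1}, g₀ - c)`. -/
def cyc {n : ℕ} (c : ℝ) (g : Fin (n + 1) → ℝ) : Fin (n + 1) → ℝ :=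
  fun i => if h : (i : ℕ) + 1 < n + 1 then g ⟨(i : ℕ) + 1, h⟩ else g 0 - c

/-- The inverse cycling operator. -/
def cycInv {n : ℕ} (c : ℝ) (g : Fin (n + 1) → ℝ) : Fin (n + 1) → ℝ :=
  fun i => if 0 < (i : ℕ) then
      g ⟨(i : ℕ) - 1, Nat.lt_of_le_of_lt (Nat.sub_le _ _) i.isLt⟩
    else g (Fin.last n) + c

/-- Integer iterates `C^j` of the cycling operator. -/
def cycIter {n : ℕ} (c : ℝ) (j : ℤ) (g : Fin (n + 1) → ℝ) : Fin (n + 1) → ℝ :=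
  if 0 ≤ j then (cyc c)^[j.toNat] g else (cycInv c)^[(-j).toNat] g

/-- Membership in the set `S`: an area vector with values in `G`, `g 0 ≤ c`,
and last entry positive. -/
def MemS {n : ℕ} (G : AddSubgroup ℝ) (c m : ℝ) (g : Fin (n + 1) → ℝ) : Prop :=
  (∀ i, g i ∈ G) ∧ IsAreaVec m g ∧ g 0 ≤ c ∧ 0 < g (Fin.last n)

lemma cyc_eq {n : ℕ} (c : ℝ) (g : Fin (n + 1) → ℝ) :
    cyc c g = fun i => g (i + 1) - if i = Fin.last n then c else 0 := by
  funext i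
  unfold cyc
  split
  · rename_i h
    have hlt : i < Fin.last n := by
      rw [Fin.lt_iff_val_lt_val]; simp only [Fin.val_last]; omega
    rw [if_neg (Fin.ne_of_lt hlt), sub_zero]
    congr 1
    rw [Fin.ext_iff, Fin.val_add_one_of_lt hlt]
  · rename_i h
    have hi : i = Fin.last n := by
      rw [Fin.ext_iff]; simp only [Fin.val_last]; omega
    rw [if_pos hi, hi, Fin.last_add_one]

lemma cycInv_eq {n : ℕ} (c : ℝ) (g : Fin (n + 1) → ℝ) :
    cycInv c g = fun i => g (i - 1) + if i = 0 then c else 0 := by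
  funext i
  unfold cycInv
  split
  · rename_i h
    have h0 : i ≠ 0 := by
      intro he; rw [he] at h; simp at h
    rw [if_neg h0, add_zero]
    congr 1
    rw [Fin.ext_iff, Fin.coe_sub_one, if_neg h0]
  · rename_i h
    have hi : i = 0 := by
      rw [Fin.ext_iff]; simp only [Fin.val_zero]; omega
    rw [if_pos hi, hi]
    have h01 : (0 - 1 : Fin (n + 1)) = Fin.last n := by
      rw [Fin.ext_iff, Fin.coe_sub_one, if_pos rfl, Fin.val_last]
    rw [h01]

lemma sum_cyc {n : ℕ} (c : ℝ) (g : Fin (n + 1) → ℝ) :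
    ∑ i, cyc c g i = (∑ i, g i) - c := by
  rw [cyc_eq, Finset.sum_sub_distrib]
  congr 1
  · exact Equiv.sum_comp (Equiv.addRight 1) g
  · simp

lemma sum_cycInv {n : ℕ} (c : ℝ) (g : Fin (n + 1) → ℝ) :
    ∑ i, cycInv c g i = (∑ i, g i) + c := by
  rw [cycInv_eq, Finset.sum_add_distrib]
  congr 1
  · exact Equiv.sum_comp (Equiv.subRight 1) g
  · simp

lemma sum_cyc_iter {n : ℕ} (c : ℝ) (k : ℕ) (g : Fin (n + 1) → ℝ) :
    ∑ i, (cyc c)^[k] g i = (∑ i, g i) - k * c := by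
  induction k generalizing g with
  | zero => simp
  | succ k ih =>
      rw [Function.iterate_succ_apply, ih, sum_cyc]
      push_cast; ring

lemma sum_cycInv_iter {n : ℕ} (c : ℝ) (k : ℕ) (g : Fin (n + 1) → ℝ) :
    ∑ i, (cycInv c)^[k] g i = (∑ i, g i) + k * c := by
  induction k generalizing g with
  | zero => simp
  | succ k ih =>
      rw [Function.iterate_succ_apply, ih, sum_cycInv]
      push_cast; ring

lemma sum_cycIter {n : ℕ} (c : ℝ) (j : ℤ) (g : Fin (n + 1) → ℝ) :
    ∑ i, cycIter c j g i = (∑ i, g i) - j * c := by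
  unfold cycIter
  split
  · rename_i h
    rw [sum_cyc_iter,
      show ((j.toNat : ℕ) : ℝ) = (j : ℝ) by exact_mod_cast Int.toNat_of_nonneg h]
  · rename_i h
    rw [sum_cycInv_iter,
      show (((-j).toNat : ℕ) : ℝ) = -(j : ℝ) by
        exact_mod_cast Int.toNat_of_nonneg (by omega : (0:ℤ) ≤ -j)]
    ring


lemma memS_upper {n : ℕ} {G : AddSubgroup ℝ} {c m : ℝ} {f : Fin (n + 1) → ℝ}
    (hm : 0 ≤ m) (hf : MemS G c m f) : ∀ i, f i ≤ c + n * m := by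
  obtain ⟨-, hA, h0, -⟩ := hf
  have key : ∀ k (hk : k ≤ n), f ⟨k, by omega⟩ ≤ f 0 + k * m := by
    intro k
    induction k with
    | zero => intro _; simp
    | succ k ih =>
        intro hk
        have hk' : k < n := by omega
        have h1 := hA ⟨k, hk'⟩
        have e1 : (⟨k, hk'⟩ : Fin n).succ = ⟨k + 1, by omega⟩ := rfl
        have e2 : (⟨k, hk'⟩ : Fin n).castSucc = ⟨k, by omega⟩ := rfl
        rw [e1, e2] at h1
        have h2 := ih (by omega)
        have : f (⟨k + 1, by omega⟩ : Fin (n + 1)) ≤ f 0 + k * m + m := by linarith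
        calc f (⟨k + 1, by omega⟩ : Fin (n + 1)) ≤ f 0 + k * m + m := this
          _ = f 0 + (k + 1 : ℕ) * m := by push_cast; ring
  intro i
  have hi : (i : ℕ) ≤ n := by omega
  have h2 := key (i : ℕ) hi
  have he : (⟨(i : ℕ), by omega⟩ : Fin (n + 1)) = i := by ext; rfl
  rw [he] at h2
  have h3 : ((i : ℕ) : ℝ) * m ≤ (n : ℝ) * m := by
    apply mul_le_mul_of_nonneg_right _ hm
    exact_mod_cast hi
  linarith

lemma memS_lower {n : ℕ} {G : AddSubgroup ℝ} {c m : ℝ} {f : Fin (n + 1) → ℝ}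
    (hm : 0 ≤ m) (hf : MemS G c m f) : ∀ i, -(n * m) ≤ f i := by
  obtain ⟨-, hA, -, hlast⟩ := hf
  have key : ∀ d (hd : d ≤ n), f (Fin.last n) ≤ f ⟨n - d, by omega⟩ + d * m := by
    intro d
    induction d with
    | zero =>
        intro _
        have : (⟨n - 0, by omega⟩ : Fin (n + 1)) = Fin.last n := by ext; simp [Fin.last]
        rw [this]; simp
    | succ d ih =>
        intro hd
        have hlt : n - (d + 1) < n := by omega
        have h1 := hA ⟨n - (d + 1), hlt⟩
        have e1 : (⟨n - (d + 1), hlt⟩ : Fin n).succ = ⟨n - d, by omega⟩ := by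
          ext; simp; omega
        have e2 : (⟨n - (d + 1), hlt⟩ : Fin n).castSucc = ⟨n - (d + 1), by omega⟩ := rfl
        rw [e1, e2] at h1
        have h2 := ih (by omega)
        calc f (Fin.last n) ≤ f ⟨n - d, by omega⟩ + d * m := h2
          _ ≤ (f ⟨n - (d + 1), by omega⟩ + m) + d * m := by linarith
          _ = f ⟨n - (d + 1), by omega⟩ + (d + 1 : ℕ) * m := by push_cast; ring
  intro i
  have hi : (i : ℕ) ≤ n := by omega
  have h2 := key (n - (i : ℕ)) (by omega)
  have he : (⟨n - (n - (i : ℕ)), by omega⟩ : Fin (n + 1)) = i := by ext; simp; omega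
  rw [he] at h2
  have h3 : ((n - (i : ℕ) : ℕ) : ℝ) * m ≤ (n : ℝ) * m := by
    apply mul_le_mul_of_nonneg_right _ hm
    exact_mod_cast Nat.sub_le n (i : ℕ)
  linarith

lemma memS_sum_bounds {n : ℕ} {G : AddSubgroup ℝ} {c m : ℝ} {f : Fin (n + 1) → ℝ}
    (hm : 0 ≤ m) (hf : MemS G c m f) :
    -((n + 1 : ℝ) * (n * m)) ≤ ∑ i, f i ∧ ∑ i, f i ≤ (n + 1 : ℝ) * (c + n * m) := by
  constructor
  · calc -((n + 1 : ℝ) * (n * m)) = ∑ _i : Fin (n + 1), -((n : ℝ) * m) := by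
          rw [Finset.sum_const, Finset.card_univ, Fintype.card_fin, nsmul_eq_mul]
          push_cast; ring
      _ ≤ ∑ i, f i := Finset.sum_le_sum fun i _ => memS_lower hm hf i
  · calc ∑ i, f i ≤ ∑ _i : Fin (n + 1), (c + (n : ℝ) * m) :=
          Finset.sum_le_sum fun i _ => memS_upper hm hf i
      _ = (n + 1 : ℝ) * (c + n * m) := by
          rw [Finset.sum_const, Finset.card_univ, Fintype.card_fin, nsmul_eq_mul]
          push_cast; ring

/-- each equivalence class of `∼` in `S` is finite. -/
theorem stmt3 (n : ℕ) (G : AddSubgroup ℝ) (c m : ℝ)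
    (hcG : c ∈ G) (hmG : m ∈ G) (hc : 0 < c) (hm : 0 ≤ m)
    (g : Fin (n + 1) → ℝ) (hg : MemS G c m g) :
    {h : Fin (n + 1) → ℝ | MemS G c m h ∧ ∃ j : ℤ, h = cycIter c j g}.Finite := by
  set T : ℝ := ∑ i, g i with hT
  set B1 : ℝ := (n + 1 : ℝ) * (c + n * m) with hB1
  set B2 : ℝ := (n + 1 : ℝ) * (n * m) with hB2
  apply Set.Finite.subset
    (Set.Finite.image (fun j => cycIter c j g)
      (Set.finite_Icc (⌈(T - B1) / c⌉) (⌊(T + B2) / c⌋)))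
  rintro h ⟨hmem, j, rfl⟩
  refine ⟨j, ?_, rfl⟩
  obtain ⟨hlb, hub⟩ := memS_sum_bounds hm hmem
  rw [sum_cycIter] at hlb hub
  constructor
  · rw [Int.ceil_le]
    rw [div_le_iff₀ hc]
    linarith
  · rw [Int.le_floor]
    rw [le_div_iff₀ hc]
    linarith
end

section
/- Each equivalence class of ∼ in S contains exactly one Dyck vector, i.e., exactly one vector all of whose entries are strictly positive. -/
theorem Int.existsUnique_and_not_succ {P : ℤ → Prop} (hP : ∀ j, P (j + 1) → P j)
    (hne : ∃ j, P j) (hbdd : ∃ j, ¬ P j) : ∃! j, P j ∧ ¬ P (j + 1) := by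
  have anti : Antitone P := antitone_int_of_succ_le hP
  obtain ⟨b, hb⟩ := hbdd
  have hle : ∀ j, P j → j ≤ b := fun j hj => not_lt.1 fun hbj => hb (anti hbj.le hj)
  obtain ⟨j, hj, hmax⟩ := Int.exists_greatest_of_bdd ⟨b, hle⟩ hne
  refine ⟨j, ⟨hj, fun hj1 => by linarith [hmax _ hj1]⟩, fun j' ⟨hj', hj'1⟩ => ?_⟩
  exact le_antisymm (hmax j' hj') (not_lt.1 fun hlt => hj'1 (anti (Int.add_one_le_of_lt hlt) hj))

theorem Int.exists_fin_add_mul (n : ℕ) (i : ℤ) :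
    ∃ (k : Fin (n + 1)) (q : ℤ), i = (k : ℕ) + q * ((n : ℤ) + 1) := by
  have hN : (0 : ℤ) < (n : ℤ) + 1 := by positivity
  have hlt := Int.emod_lt_of_pos i hN
  refine ⟨⟨(i % ((n : ℤ) + 1)).toNat, by omega⟩, i / ((n : ℤ) + 1), ?_⟩
  have := Int.emod_add_mul_ediv i ((n : ℤ) + 1)
  simp only [Int.toNat_of_nonneg (Int.emod_nonneg i hN.ne')]
  linarith

/-- The bi-infinite extension of `g`, with `cycSeq c g (k + q * (n + 1)) = g k - q * c`. -/
noncomputable def cycSeq {n : ℕ} (c : ℝ) (g : Fin (n + 1) → ℝ) (i : ℤ) : ℝ :=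
  g ⟨(i % ((n : ℤ) + 1)).toNat,
      (Int.toNat_lt' n.succ_pos).2 (by exact_mod_cast Int.emod_lt_of_pos i (by positivity))⟩
    - (i / ((n : ℤ) + 1) : ℤ) * c

noncomputable def cycWindow {n : ℕ} (c : ℝ) (g : Fin (n + 1) → ℝ) (j : ℤ) :
    Fin (n + 1) → ℝ :=
  fun k => cycSeq c g (j + (k : ℕ))

section CycSeq

variable {n : ℕ} {c : ℝ} {g : Fin (n + 1) → ℝ}

theorem cycSeq_add_mul (i q : ℤ) :
    cycSeq c g (i + q * ((n : ℤ) + 1)) = cycSeq c g i - q * c := by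
  have hN : (n : ℤ) + 1 ≠ 0 := by positivity
  have hmod : (i + q * ((n : ℤ) + 1)) % ((n : ℤ) + 1) = i % ((n : ℤ) + 1) := by
    rw [mul_comm, Int.add_mul_emod_self_left]
  have hdiv : (i + q * ((n : ℤ) + 1)) / ((n : ℤ) + 1) = i / ((n : ℤ) + 1) + q :=
    Int.add_mul_ediv_right i q hN
  simp only [cycSeq, hmod, hdiv, Int.cast_add]
  ring

theorem cycSeq_add_succ (i : ℤ) : cycSeq c g (i + ((n : ℤ) + 1)) = cycSeq c g i - c := by
  simpa using cycSeq_add_mul (c := c) (g := g) i 1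

theorem cycSeq_natCast (k : Fin (n + 1)) : cycSeq c g (k : ℕ) = g k := by
  have hk : ((k : ℕ) : ℤ) < (n : ℤ) + 1 := by exact_mod_cast k.isLt
  simp [cycSeq, Int.emod_eq_of_lt (by positivity) hk, Int.ediv_eq_zero_of_lt (by positivity) hk]

theorem cycSeq_zero : cycSeq c g 0 = g 0 := cycSeq_natCast 0

theorem cycSeq_succ_le {m : ℝ} (harea : IsAreaVec m g)
    (hwrap : g 0 - c ≤ g (Fin.last n) + m) (i : ℤ) :
    cycSeq c g (i + 1) ≤ cycSeq c g i + m := by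
  obtain ⟨k, q, rfl⟩ := Int.exists_fin_add_mul n i
  rw [add_right_comm, cycSeq_add_mul, cycSeq_add_mul, sub_add_eq_add_sub, sub_le_sub_iff_right]
  induction k using Fin.lastCases with
  | last =>
    have hwrap' := cycSeq_add_succ (c := c) (g := g) 0
    rw [zero_add, cycSeq_zero] at hwrap'
    rw [cycSeq_natCast, Fin.val_last, hwrap']
    linarith
  | cast i =>
    have := harea i
    rw [← cycSeq_natCast (c := c) (g := g) i.succ, ← cycSeq_natCast (c := c) (g := g)] at this
    simpa using this

theorem cycSeq_mem {G : AddSubgroup ℝ} (hG : ∀ k, g k ∈ G) (hcG : c ∈ G) (i : ℤ) :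
    cycSeq c g i ∈ G :=
  sub_mem (hG _) (by simpa [zsmul_eq_mul] using G.zsmul_mem hcG (i / ((n : ℤ) + 1)))

theorem cycWindow_zero : cycWindow c g 0 = g := by
  funext k
  simp [cycWindow, cycSeq_natCast]

theorem cycWindow_succ_castSucc (j : ℤ) (i : Fin n) :
    cycWindow c g (j + 1) i.castSucc = cycWindow c g j i.succ := by
  simp only [cycWindow, Fin.val_castSucc, Fin.val_succ]
  push_cast
  ring_nf

theorem cycWindow_succ_last (j : ℤ) :
    cycWindow c g (j + 1) (Fin.last n) = cycWindow c g j 0 - c := by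
  simp only [cycWindow, Fin.val_last, Fin.val_zero, Nat.cast_zero, add_zero]
  rw [← cycSeq_add_succ]
  ring_nf

theorem cyc_cycWindow (j : ℤ) : cyc c (cycWindow c g j) = cycWindow c g (j + 1) := by
  funext k
  induction k using Fin.lastCases with
  | last => simp [cyc, cycWindow_succ_last]
  | cast i =>
    rw [cycWindow_succ_castSucc]
    simp [cyc, Fin.succ]

theorem cycInv_cycWindow (j : ℤ) : cycInv c (cycWindow c g (j + 1)) = cycWindow c g j := by
  funext k
  induction k using Fin.cases with
  | zero => simp [cycInv, cycWindow_succ_last]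
  | succ i =>
    rw [← cycWindow_succ_castSucc]
    simp [cycInv, Fin.castSucc, Fin.castAdd, Fin.castLE]

theorem cycIter_eq_cycWindow (j : ℤ) : cycIter c j g = cycWindow c g j := by
  have hpos (t : ℕ) : (cyc c)^[t] g = cycWindow c g t := by
    induction t with
    | zero => exact cycWindow_zero.symm
    | succ t ih => rw [Function.iterate_succ_apply', ih, cyc_cycWindow]; push_cast; rfl
  have hneg (t : ℕ) : (cycInv c)^[t] g = cycWindow c g (-t) := by
    induction t with
    | zero => exact cycWindow_zero.symm
    | succ t ih =>
      rw [Function.iterate_succ_apply', ih, ← cycInv_cycWindow (-(t + 1 : ℕ) : ℤ)]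
      push_cast
      ring_nf
  unfold cycIter
  split_ifs with hj
  · rw [hpos, Int.toNat_of_nonneg hj]
  · rw [hneg, Int.toNat_of_nonneg (by omega), neg_neg]

theorem forall_pos_cycWindow_of_succ (hc : 0 ≤ c) {j : ℤ}
    (h : ∀ k, 0 < cycWindow c g (j + 1) k) : ∀ k, 0 < cycWindow c g j k := by
  refine Fin.cases ?_ fun i => ?_
  · have := h (Fin.last n)
    rw [cycWindow_succ_last] at this
    linarith
  · rw [← cycWindow_succ_castSucc]
    exact h _

theorem forall_pos_cycWindow_succ_iff {j : ℤ} (h : ∀ k, 0 < cycWindow c g j k) :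
    (∀ k, 0 < cycWindow c g (j + 1) k) ↔ c < cycWindow c g j 0 := by
  rw [Fin.forall_fin_succ']
  simp only [cycWindow_succ_castSucc, cycWindow_succ_last, sub_pos]
  exact and_iff_right fun i => h _

theorem exists_forall_pos_cycWindow (hc : 0 < c) : ∃ j, ∀ k, 0 < cycWindow c g j k := by
  have hqc := Filter.Tendsto.atTop_mul_const hc tendsto_natCast_atTop_atTop
  obtain ⟨q, hq⟩ := (Filter.eventually_all.2 fun k => hqc.eventually_gt_atTop (-g k)).exists
  refine ⟨-q * ((n : ℤ) + 1), fun k => ?_⟩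
  have := hq k
  rw [cycWindow, add_comm, cycSeq_add_mul, cycSeq_natCast]
  push_cast
  linarith

theorem exists_not_forall_pos_cycWindow (hc : 0 < c) : ∃ j, ¬ ∀ k, 0 < cycWindow c g j k := by
  obtain ⟨q, hq⟩ := Archimedean.arch (g 0) hc
  refine ⟨q * ((n : ℤ) + 1), fun h => ?_⟩
  have := h 0
  rw [cycWindow, Fin.val_zero, Nat.cast_zero, add_zero, ← zero_add (_ * _), cycSeq_add_mul,
    cycSeq_zero] at this
  rw [nsmul_eq_mul] at hq
  push_cast at this
  linarith

theorem memS_cycWindow {G : AddSubgroup ℝ} {m : ℝ} (hcG : c ∈ G) (hm : 0 ≤ m)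
    (hg : MemS G c m g) {j : ℤ} (hpos : ∀ k, 0 < cycWindow c g j k)
    (hhead : cycWindow c g j 0 ≤ c) : MemS G c m (cycWindow c g j) := by
  obtain ⟨hG, harea, hg0, hglast⟩ := hg
  refine ⟨fun k => cycSeq_mem hG hcG _, fun i => ?_, hhead, hpos _⟩
  have := cycSeq_succ_le (c := c) harea (by linarith) (j + (i.castSucc : ℕ))
  simpa [cycWindow, add_assoc] using this

end CycSeq

theorem stmt4_general (n : ℕ) (G : AddSubgroup ℝ) (c m : ℝ)
    (hcG : c ∈ G) (hc : 0 < c) (hm : 0 ≤ m)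
    (g : Fin (n + 1) → ℝ) (hg : MemS G c m g) :
    ∃! h : Fin (n + 1) → ℝ,
      MemS G c m h ∧ (∃ j : ℤ, h = cycIter c j g) ∧ (∀ i, 0 < h i) := by
  obtain ⟨j, ⟨hpos, hnext⟩, huniq⟩ :=
    Int.existsUnique_and_not_succ (fun _ => forall_pos_cycWindow_of_succ hc.le)
      (exists_forall_pos_cycWindow hc) (exists_not_forall_pos_cycWindow (g := g) hc)
  have hhead : cycWindow c g j 0 ≤ c :=
    not_lt.1 fun h => hnext ((forall_pos_cycWindow_succ_iff hpos).2 h)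
  refine ⟨cycWindow c g j,
    ⟨memS_cycWindow hcG hm hg hpos hhead, ⟨j, (cycIter_eq_cycWindow j).symm⟩, hpos⟩, ?_⟩
  rintro _ ⟨hS, ⟨j', rfl⟩, hpos'⟩
  rw [cycIter_eq_cycWindow] at hS hpos' ⊢
  refine congrArg _ (huniq j' ⟨hpos', fun h => ?_⟩)
  exact (not_lt.2 hS.2.2.1) ((forall_pos_cycWindow_succ_iff hpos').1 h)

/-- each equivalence class of `∼` in `S` contains exactly one Dyck
vector (a vector all of whose entries are strictly positive). -/
theorem stmt4 (n : ℕ) (G : AddSubgroup ℝ) (c m : ℝ)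
    (hcG : c ∈ G) (hmG : m ∈ G) (hc : 0 < c) (hm : 0 ≤ m)
    (g : Fin (n + 1) → ℝ) (hg : MemS G c m g) :
    ∃! h : Fin (n + 1) → ℝ,
      MemS G c m h ∧ (∃ j : ℤ, h = cycIter c j g) ∧ (∀ i, 0 < h i) :=
  stmt4_general n G c m hcG hc hm g hg
end

section
/- Let g ∈ S, e ≥ 0 an integer, and 0 < p < n. Then C^{en+p}(g) ∈ S if and only if g_p ≤ (e+1)c and g_{p-1} > (e+1)c. -/
lemma cyc_iter_apply {n : ℕ} (c : ℝ) (g : Fin (n+1) → ℝ) (k : ℕ) (i : Fin (n+1)) :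
    (cyc c)^[k] g i
      = g ⟨((i:ℕ)+k) % (n+1), Nat.mod_lt _ (Nat.succ_pos n)⟩
        - ((((i:ℕ)+k)/(n+1) : ℕ) : ℝ) * c := by
  induction k generalizing g i with
  | zero =>
      simp [Nat.mod_eq_of_lt i.isLt, Nat.div_eq_of_lt i.isLt, Fin.eta]
  | succ k ih =>
      rw [Function.iterate_succ_apply']
      show (if h : (i : ℕ) + 1 < n + 1 then (cyc c)^[k] g ⟨(i : ℕ) + 1, h⟩
            else (cyc c)^[k] g 0 - c) = _
      by_cases h : (i:ℕ) + 1 < n + 1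
      · rw [dif_pos h, ih]
        have hv : (i:ℕ) + 1 + k = (i:ℕ) + (k+1) := by omega
        simp only [hv]
      · rw [dif_neg h, ih]
        simp only [Fin.val_zero, Nat.zero_add]
        have e1 : ((i:ℕ)+(k+1)) % (n+1) = k % (n+1) := by
          rw [show (i:ℕ)+(k+1) = k+(n+1) by omega, Nat.add_mod_right]
        have e2 : ((i:ℕ)+(k+1)) / (n+1) = k/(n+1) + 1 := by
          rw [show (i:ℕ)+(k+1) = k+(n+1) by omega, Nat.add_div_right _ (Nat.succ_pos n)]
        simp only [e1, e2]
        push_cast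
        ring

lemma cyc_iter_key {n : ℕ} (c : ℝ) (g : Fin (n+1) → ℝ) (e p : ℕ) (hp2 : p < n+1)
    (i : Fin (n+1)) :
    (cyc c)^[e*(n+1)+p] g i
      = if h : (i:ℕ)+p < n+1 then g ⟨(i:ℕ)+p, h⟩ - (e:ℝ)*c
        else g ⟨(i:ℕ)+p-(n+1), by omega⟩ - ((e:ℝ)+1)*c := by
  rw [cyc_iter_apply]
  by_cases h : (i:ℕ)+p < n+1
  · rw [dif_pos h]
    have e1 : ((i:ℕ)+(e*(n+1)+p)) % (n+1) = (i:ℕ)+p := by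
      rw [show (i:ℕ)+(e*(n+1)+p) = ((i:ℕ)+p)+(n+1)*e by ring,
        Nat.add_mul_mod_self_left, Nat.mod_eq_of_lt h]
    have e2 : ((i:ℕ)+(e*(n+1)+p)) / (n+1) = e := by
      rw [show (i:ℕ)+(e*(n+1)+p) = ((i:ℕ)+p)+(n+1)*e by ring,
        Nat.add_mul_div_left _ _ (Nat.succ_pos n), Nat.div_eq_of_lt h]
      omega
    simp only [e1, e2]
  · rw [dif_neg h]
    have hi : (i:ℕ) < n+1 := i.isLt
    have e1 : ((i:ℕ)+(e*(n+1)+p)) % (n+1) = (i:ℕ)+p-(n+1) := by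
      rw [show (i:ℕ)+(e*(n+1)+p) = ((i:ℕ)+p-(n+1))+(n+1)*(e+1) by have : (n+1)*(e+1) = e*(n+1)+(n+1) := (by ring); omega,
        Nat.add_mul_mod_self_left, Nat.mod_eq_of_lt (by omega)]
    have e2 : ((i:ℕ)+(e*(n+1)+p)) / (n+1) = e+1 := by
      rw [show (i:ℕ)+(e*(n+1)+p) = ((i:ℕ)+p-(n+1))+(n+1)*(e+1) by have : (n+1)*(e+1) = e*(n+1)+(n+1) := (by ring); omega,
        Nat.add_mul_div_left _ _ (Nat.succ_pos n), Nat.div_eq_of_lt (by omega)]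
      omega
    simp only [e1, e2]
    push_cast
    ring_nf

/-- for `g ∈ S`, integer `e ≥ 0`, and `0 < p < ` length, `C^{e·n+p}(g) ∈ S`
iff `g_p ≤ (e+1)c` and `g_{p-1} > (e+1)c`. -/
theorem stmt6 (n : ℕ) (G : AddSubgroup ℝ) (c m : ℝ)
    (hcG : c ∈ G) (hmG : m ∈ G) (hc : 0 < c) (hm : 0 ≤ m)
    (g : Fin (n + 1) → ℝ) (hg : MemS G c m g)
    (e : ℕ) (p : ℕ) (hp1 : 0 < p) (hp2 : p < n + 1) :
    MemS G c m (cycIter c ((e : ℤ) * (n + 1) + p) g) ↔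
      (g ⟨p, hp2⟩ ≤ ((e : ℝ) + 1) * c ∧
        ((e : ℝ) + 1) * c < g ⟨p - 1, Nat.lt_of_le_of_lt (Nat.sub_le _ _) hp2⟩) := by
  obtain ⟨hG, hA, h0, hl⟩ := hg
  -- reduce cycIter to nat iterate
  have hjeq : (e : ℤ) * (n + 1) + p = ((e*(n+1)+p : ℕ) : ℤ) := by push_cast; ring
  have hcast : cycIter c ((e : ℤ) * (n + 1) + p) g = (cyc c)^[e*(n+1)+p] g := by
    rw [cycIter, hjeq, if_pos (Int.natCast_nonneg _), Int.toNat_natCast]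
  rw [hcast]
  set h := (cyc c)^[e*(n+1)+p] g with hh
  have key : ∀ i : Fin (n+1), h i
      = if hlt : (i:ℕ)+p < n+1 then g ⟨(i:ℕ)+p, hlt⟩ - (e:ℝ)*c
        else g ⟨(i:ℕ)+p-(n+1), by omega⟩ - ((e:ℝ)+1)*c :=
    fun i => cyc_iter_key c g e p hp2 i
  -- helper version of the area-vector hypothesis
  have hA' : ∀ j (hj : j+1 < n+1), g ⟨j+1, hj⟩ ≤ g ⟨j, by omega⟩ + m :=
    fun j hj => hA ⟨j, by omega⟩
  have hec : (e:ℝ)*c ∈ G := by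
    rw [← nsmul_eq_mul]; exact AddSubgroup.nsmul_mem G hcG e
  have hec1 : ((e:ℝ)+1)*c ∈ G := by
    have : ((e:ℝ)+1)*c = ((e+1:ℕ):ℝ)*c := by push_cast; ring
    rw [this, ← nsmul_eq_mul]; exact AddSubgroup.nsmul_mem G hcG (e+1)
  -- compute h 0 and h last
  have h0' : h 0 = g ⟨p, hp2⟩ - (e:ℝ)*c := by
    rw [key 0]; simp [hp2]
  have hl' : h (Fin.last n) = g ⟨p-1, by omega⟩ - ((e:ℝ)+1)*c := by
    rw [key (Fin.last n), dif_neg (by simp only [Fin.val_last]; omega)]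
    have hidx : (n : ℕ)+p-(n+1) = p-1 := by omega
    simp only [Fin.val_last, hidx]
  constructor
  · rintro ⟨-, -, hs0, hsl⟩
    rw [h0'] at hs0
    rw [hl'] at hsl
    constructor
    · linarith
    · linarith [hsl]
  · rintro ⟨c1, c2⟩
    refine ⟨?_, ?_, ?_, ?_⟩
    · intro i
      rw [key i]
      split
      · exact G.sub_mem (hG _) hec
      · exact G.sub_mem (hG _) hec1
    · intro i
      rw [key i.succ, key i.castSucc]
      simp only [Fin.val_succ, Fin.coe_castSucc]
      have hi : (i:ℕ) < n := i.isLt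
      by_cases h1 : (i:ℕ)+1+p < n+1
      · rw [dif_pos h1, dif_pos (by omega)]
        have := hA' ((i:ℕ)+p) (by omega)
        have hx : (⟨(i:ℕ)+1+p, h1⟩ : Fin (n+1)) = ⟨(i:ℕ)+p+1, by omega⟩ := by
          apply Fin.ext; simp; omega
        rw [hx]
        linarith
      · rw [dif_neg h1]
        by_cases h2 : (i:ℕ)+p < n+1
        · -- wrap happens here: i+p = n
          rw [dif_pos h2]
          have hip : (i:ℕ)+p = n := by omega
          have hx1 : (⟨(i:ℕ)+1+p-(n+1), by omega⟩ : Fin (n+1)) = 0 := by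
            apply Fin.ext; simp; omega
          have hx2 : (⟨(i:ℕ)+p, h2⟩ : Fin (n+1)) = Fin.last n := by
            apply Fin.ext; simp [Fin.val_last]; omega
          rw [hx1, hx2]
          linarith
        · rw [dif_neg h2]
          have := hA' ((i:ℕ)+p-(n+1)) (by omega)
          have hx : (⟨(i:ℕ)+1+p-(n+1), by omega⟩ : Fin (n+1))
              = ⟨((i:ℕ)+p-(n+1))+1, by omega⟩ := by
            apply Fin.ext; simp; omega
          rw [hx]
          linarith
    · rw [h0']; linarith
    · rw [hl']; linarith
end

section
/- For all k, k' ∈ {0, 1, …, n−1} there is a bijection between the set of k-skeletal area vectors and the set of k'-skeletal area vectors, sending each k-skeletal vector to the unique k'-skeletal vector in its ∼-equivalence class. -/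
/-- `g` is a `k`-skeletal area vector: (A0) `g 0 ≤ c`; (A1) the last `k+1` entries
are strictly positive; (A2) no `k+1` consecutive entries all strictly exceed `c`. -/
def IsSkeletal {n : ℕ} (c m : ℝ) (k : ℕ) (g : Fin (n + 1) → ℝ) : Prop :=
  IsAreaVec m g ∧ g 0 ≤ c ∧
  (∀ i : Fin (n + 1), n - k ≤ (i : ℕ) → 0 < g i) ∧
  ¬ ∃ s : ℕ, s + k ≤ n ∧ ∀ j : Fin (n + 1), s ≤ (j : ℕ) → (j : ℕ) ≤ s + k → c < g j

namespace Stmt8Aux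

/-- Extension of `g` to `ℤ`, quasi-periodic with drop `c` per period `n+1`. -/
noncomputable def extg (n : ℕ) (c : ℝ) (g : Fin (n + 1) → ℝ) (x : ℤ) : ℝ :=
  g ⟨(x % ((n : ℤ) + 1)).toNat, by
      have h1 : (0:ℤ) < (n : ℤ) + 1 := by positivity
      have h2 := Int.emod_lt_of_pos x h1
      have h3 := Int.emod_nonneg x (by positivity : ((n:ℤ) + 1) ≠ 0)
      omega⟩ - c * ((x / ((n : ℤ) + 1) : ℤ) : ℝ)

lemma extg_apply {n : ℕ} {c : ℝ} (g : Fin (n + 1) → ℝ) (x : ℤ)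
    (h : (x % ((n : ℤ) + 1)).toNat < n + 1) :
    extg n c g x = g ⟨(x % ((n : ℤ) + 1)).toNat, h⟩ - c * ((x / ((n : ℤ) + 1) : ℤ) : ℝ) := rfl

lemma extg_add_mul {n : ℕ} {c : ℝ} (g : Fin (n + 1) → ℝ) (x q : ℤ) :
    extg n c g (x + ((n : ℤ) + 1) * q) = extg n c g x - c * q := by
  have hne : ((n : ℤ) + 1) ≠ 0 := by positivity
  unfold extg
  simp only [Int.add_mul_emod_self_left, Int.add_mul_ediv_left x q hne]
  push_cast
  ring

lemma extg_coe {n : ℕ} {c : ℝ} (g : Fin (n + 1) → ℝ) (i : Fin (n + 1)) :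
    extg n c g ((i : ℕ) : ℤ) = g i := by
  have h1 : ((i : ℕ) : ℤ) % ((n : ℤ) + 1) = (i : ℕ) :=
    Int.emod_eq_of_lt (by positivity) (by exact_mod_cast i.isLt)
  have h2 : ((i : ℕ) : ℤ) / ((n : ℤ) + 1) = 0 :=
    Int.ediv_eq_zero_of_lt (by positivity) (by exact_mod_cast i.isLt)
  unfold extg
  simp [h1, h2]

lemma extg_period {n : ℕ} {c : ℝ} (g : Fin (n + 1) → ℝ) (x : ℤ) :
    extg n c g (x + ((n : ℤ) + 1)) = extg n c g x - c := by
  have := extg_add_mul (c := c) g x 1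
  simpa using this

lemma extg_eval {n : ℕ} {c : ℝ} (g : Fin (n + 1) → ℝ) (q : ℤ) (i : Fin (n + 1)) :
    extg n c g (((i : ℕ) : ℤ) + ((n : ℤ) + 1) * q) = g i - c * q := by
  rw [extg_add_mul, extg_coe]


lemma extg_decomp {n : ℕ} {c : ℝ} (g : Fin (n + 1) → ℝ) (x : ℤ) :
    ∃ (q : ℤ) (i : Fin (n + 1)), x = ((i : ℕ) : ℤ) + ((n : ℤ) + 1) * q := by
  have h1 : (0:ℤ) < (n : ℤ) + 1 := by positivity
  have h2 := Int.emod_lt_of_pos x h1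
  have h3 := Int.emod_nonneg x (by positivity : ((n:ℤ) + 1) ≠ 0)
  refine ⟨x / ((n : ℤ) + 1), ⟨(x % ((n : ℤ) + 1)).toNat, by omega⟩, ?_⟩
  have h4 := Int.emod_add_mul_ediv x ((n : ℤ) + 1)
  simp only []
  omega

lemma extg_step {n : ℕ} {c m : ℝ} {g : Fin (n + 1) → ℝ}
    (hA : IsAreaVec m g) (h0 : g 0 ≤ c) (hl : 0 < g (Fin.last n)) (hm : 0 ≤ m) (x : ℤ) :
    extg n c g (x + 1) ≤ extg n c g x + m := by
  obtain ⟨q, i, rfl⟩ := extg_decomp (c := c) g x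
  rcases lt_or_eq_of_le (Nat.lt_succ_iff.mp i.isLt) with hi | hi
  · -- i.val < n
    have e1 : (((i : ℕ) : ℤ) + ((n : ℤ) + 1) * q) + 1
        = (((((⟨(i : ℕ), hi⟩ : Fin n).succ : Fin (n+1)) : ℕ)) : ℤ) + ((n : ℤ) + 1) * q := by
      push_cast [Fin.val_succ]
      ring
    have e2 : (((i : ℕ) : ℤ) + ((n : ℤ) + 1) * q)
        = (((((⟨(i : ℕ), hi⟩ : Fin n).castSucc : Fin (n+1)) : ℕ)) : ℤ) + ((n : ℤ) + 1) * q := by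
      push_cast [Fin.coe_castSucc]
      ring
    rw [e1, extg_eval]
    conv_rhs => rw [e2, extg_eval]
    have := hA ⟨(i : ℕ), hi⟩
    linarith
  · -- i.val = n
    have e1 : (((i : ℕ) : ℤ) + ((n : ℤ) + 1) * q) + 1
        = (((0 : Fin (n+1)) : ℕ) : ℤ) + ((n : ℤ) + 1) * (q + 1) := by
      simp [hi]
      ring
    have e2 : i = Fin.last n := by
      apply Fin.ext
      simpa using hi
    rw [e1, extg_eval, extg_eval, e2]
    have : g 0 - c ≤ g (Fin.last n) + m := by linarith
    push_cast
    linarith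

/-- kill `cyc` of a shifted extension -/
lemma cyc_shift {n : ℕ} {c : ℝ} (g : Fin (n + 1) → ℝ) (t : ℤ) :
    cyc c (fun i : Fin (n + 1) => extg n c g (t + ((i : ℕ) : ℤ)))
      = fun i : Fin (n + 1) => extg n c g ((t + 1) + ((i : ℕ) : ℤ)) := by
  funext i
  unfold cyc
  split
  · next h =>
      show extg n c g (t + (((i : ℕ) + 1 : ℕ) : ℤ)) = _
      congr 1
      push_cast
      ring
  · next h =>
      have hi : (i : ℕ) = n := by omega
      show extg n c g (t + (((0 : Fin (n+1)) : ℕ) : ℤ)) - c = _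
      have e : (t + 1) + ((i : ℕ) : ℤ) = (t + (((0 : Fin (n+1)) : ℕ) : ℤ)) + ((n : ℤ) + 1) := by
        simp [hi]
        ring
      rw [e, extg_period]

lemma cycInv_shift {n : ℕ} {c : ℝ} (g : Fin (n + 1) → ℝ) (t : ℤ) :
    cycInv c (fun i : Fin (n + 1) => extg n c g (t + ((i : ℕ) : ℤ)))
      = fun i : Fin (n + 1) => extg n c g ((t - 1) + ((i : ℕ) : ℤ)) := by
  funext i
  unfold cycInv
  split
  · next h =>
      show extg n c g (t + (((i : ℕ) - 1 : ℕ) : ℤ)) = _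
      congr 1
      have : (1:ℕ) ≤ (i : ℕ) := h
      push_cast [Nat.cast_sub this]
      ring
  · next h =>
      show extg n c g (t + ((Fin.last n : ℕ) : ℤ)) + c = _
      have hi : (i : ℕ) = 0 := by omega
      have e : t + ((Fin.last n : ℕ) : ℤ) = ((t - 1) + ((i : ℕ) : ℤ)) + ((n : ℤ) + 1) := by
        simp [hi, Fin.val_last]
        try ring
      rw [e, extg_period]
      ring

lemma cycIter_shift {n : ℕ} {c : ℝ} (g : Fin (n + 1) → ℝ) (j : ℤ) :
    cycIter c j g = fun i : Fin (n + 1) => extg n c g (j + ((i : ℕ) : ℤ)) := by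
  have base : g = fun i : Fin (n + 1) => extg n c g ((0:ℤ) + ((i : ℕ) : ℤ)) := by
    funext i
    rw [zero_add, extg_coe]
  have hpos : ∀ N : ℕ, (cyc c)^[N] g = fun i : Fin (n + 1) => extg n c g ((N : ℤ) + ((i : ℕ) : ℤ)) := by
    intro N
    induction N with
    | zero => simpa using base
    | succ N ih =>
        rw [Function.iterate_succ_apply', ih, cyc_shift]
        funext i
        congr 1 <;> push_cast <;> try ring


  have hneg : ∀ N : ℕ, (cycInv c)^[N] g = fun i : Fin (n + 1) => extg n c g ((-(N : ℤ)) + ((i : ℕ) : ℤ)) := by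
    intro N
    induction N with
    | zero => simpa using base
    | succ N ih =>
        rw [Function.iterate_succ_apply', ih]
        have := cycInv_shift (c := c) g (-(N : ℤ))
        rw [this]
        funext i
        congr 1
        push_cast
        ring
  unfold cycIter
  split
  · next hj => rw [hpos j.toNat, Int.toNat_of_nonneg hj]
  · next hj =>
      rw [hneg (-j).toNat]
      have : ((-j).toNat : ℤ) = -j := Int.toNat_of_nonneg (by omega)
      rw [this, neg_neg]

lemma extg_extg {n : ℕ} {c : ℝ} (g : Fin (n + 1) → ℝ) (t x : ℤ) :
    extg n c (fun i : Fin (n + 1) => extg n c g (t + ((i : ℕ) : ℤ))) x = extg n c g (t + x) := by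
  have h1 : (0:ℤ) < (n : ℤ) + 1 := by positivity
  have h2 := Int.emod_lt_of_pos x h1
  have h3 := Int.emod_nonneg x (by positivity : ((n:ℤ) + 1) ≠ 0)
  rw [extg_apply _ x (by omega)]
  simp only []
  have h4 : (((x % ((n : ℤ) + 1)).toNat : ℕ) : ℤ) = x % ((n : ℤ) + 1) := Int.toNat_of_nonneg h3
  rw [h4]
  have h5 : t + x = (t + x % ((n : ℤ) + 1)) + ((n : ℤ) + 1) * (x / ((n : ℤ) + 1)) := by
    have h6 := Int.emod_add_mul_ediv x ((n : ℤ) + 1)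
    linarith
  rw [h5, extg_add_mul]

lemma cycIter_comp {n : ℕ} {c : ℝ} (g : Fin (n + 1) → ℝ) (a b : ℤ) :
    cycIter c a (cycIter c b g) = cycIter c (a + b) g := by
  rw [cycIter_shift (cycIter c b g) a, cycIter_shift g b, cycIter_shift g (a + b)]
  funext i
  rw [extg_extg]
  congr 1
  ring

lemma cycIter_zero {n : ℕ} {c : ℝ} (g : Fin (n + 1) → ℝ) : cycIter c 0 g = g := by
  rw [cycIter_shift]
  funext i
  rw [zero_add, extg_coe]

lemma cycIter_memG {n : ℕ} {c : ℝ} {G : AddSubgroup ℝ} {g : Fin (n + 1) → ℝ}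
    (hg : ∀ i, g i ∈ G) (hc : c ∈ G) (j : ℤ) (i : Fin (n + 1)) :
    cycIter c j g i ∈ G := by
  rw [cycIter_shift]
  set x := j + ((i : ℕ) : ℤ)
  have h1 : (0:ℤ) < (n : ℤ) + 1 := by positivity
  have h2 := Int.emod_lt_of_pos x h1
  have h3 := Int.emod_nonneg x (by positivity : ((n:ℤ) + 1) ≠ 0)
  show extg n c g x ∈ G
  rw [extg_apply _ x (by omega)]
  refine sub_mem (hg _) ?_
  rw [mul_comm, ← zsmul_eq_mul]
  exact AddSubgroup.zsmul_mem G hc _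


/-- The combinatorial "good position" predicate. -/
def GoodAt (n k : ℕ) (D : ℤ → Prop) (u : ℤ) : Prop :=
  D u ∧ (∀ j : ℤ, 1 ≤ j → j ≤ (k : ℤ) + 1 → ¬ D (u - j)) ∧
  ∀ s : ℤ, 0 ≤ s → s + (k : ℤ) ≤ (n : ℤ) → ∃ j : ℤ, s ≤ j ∧ j ≤ s + (k : ℤ) ∧ D (u + j)

lemma existsUnique_goodAt (n k : ℕ) (hk : k ≤ n) (D : ℤ → Prop)
    (hup : ∀ x, D x → D (x + ((n : ℤ) + 1)))
    (hlow : ∃ a : ℤ, ∀ x ≤ a, ¬ D x)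
    (hhigh : ∃ b : ℤ, ∀ x, b ≤ x → D x) :
    ∃! u : ℤ, GoodAt n k D u := by
  classical
  obtain ⟨a, ha⟩ := hlow
  obtain ⟨b, hb⟩ := hhigh
  have hupN : ∀ (N : ℕ) (x : ℤ), D x → D (x + ((n : ℤ) + 1) * N) := by
    intro N
    induction N with
    | zero => intro x hx; simpa using hx
    | succ N ih =>
        intro x hx
        have h1 := hup _ (ih x hx)
        have e : x + ((n : ℤ) + 1) * N + ((n : ℤ) + 1) = x + ((n : ℤ) + 1) * (N + 1 : ℕ) := by
          push_cast; ring
        rwa [e] at h1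
  have hupZ : ∀ (t : ℤ), 0 ≤ t → ∀ x : ℤ, D x → D (x + ((n : ℤ) + 1) * t) := by
    intro t ht x hx
    have := hupN t.toNat x hx
    rwa [Int.toNat_of_nonneg ht] at this
  -- the set of "forward-good" elements of D
  set P : ℤ → Prop := fun u => D u ∧
    ∀ s : ℤ, 0 ≤ s → s + (k : ℤ) ≤ (n : ℤ) → ∃ j : ℤ, s ≤ j ∧ j ≤ s + (k : ℤ) ∧ D (u + j)
    with hP
  have hPb : P b := by
    refine ⟨hb b le_rfl, fun s hs0 hsn => ⟨s, le_rfl, by omega, hb _ (by omega)⟩⟩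
  have hPbdd : ∃ lb : ℤ, ∀ z : ℤ, P z → lb ≤ z := by
    refine ⟨a + 1, fun z hz => ?_⟩
    by_contra hlt
    exact ha z (by omega) hz.1
  obtain ⟨u, hu, hmin⟩ := Int.exists_least_of_bdd hPbdd ⟨b, hPb⟩
  -- u is good
  have hgood : GoodAt n k D u := by
    refine ⟨hu.1, ?_, hu.2⟩
    intro j hj1 hjk hDv
    set v := u - j with hv
    have hPv : P v := by
      refine ⟨hDv, fun s hs0 hsn => ?_⟩
      rcases le_or_gt (v + s) u with hc2 | hc2
      · rcases le_or_gt u (v + s + k) with hc1 | hc1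
        · refine ⟨u - v, by omega, by omega, ?_⟩
          have e : v + (u - v) = u := by ring
          rw [e]; exact hu.1
        · -- v + s + k < u ≤ v + k + 1 forces s = 0
          have hs : s = 0 := by omega
          exact ⟨0, by omega, by omega, by simpa using hDv⟩
      · obtain ⟨j', hj'1, hj'2, hj'D⟩ := hu.2 (v + s - u) (by omega) (by omega)
        refine ⟨u + j' - v, by omega, by omega, ?_⟩
        have e : v + (u + j' - v) = u + j' := by ring
        rw [e]; exact hj'D
    have := hmin v hPv
    omega
  -- uniqueness: no two distinct good points
  have hcore : ∀ u' v' : ℤ, GoodAt n k D u' → GoodAt n k D v' → u' < v' → False := by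
    intro u v hu hv huv
    rcases le_or_gt v (u + (k : ℤ) + 1) with hcase | hcase
    · apply hv.2.1 (v - u) (by omega) (by omega)
      have e : v - (v - u) = u := by ring
      rw [e]; exact hu.1
    · set bb := v - (k : ℤ) - 1 with hbb
      set t := (bb - u) / ((n : ℤ) + 1) with htdef
      have ht0 : 0 ≤ t := Int.ediv_nonneg (by omega) (by positivity)
      set w := bb - ((n : ℤ) + 1) * t with hw
      have hwmod : w - u = (bb - u) % ((n : ℤ) + 1) := by
        rw [Int.emod_def]; ring
      have hw0 : 0 ≤ w - u := by
        rw [hwmod]; exact Int.emod_nonneg _ (by positivity)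
      have hwn : w - u ≤ (n : ℤ) := by
        have := Int.emod_lt_of_pos (bb - u) (by positivity : (0:ℤ) < (n : ℤ) + 1)
        omega
      have hblock : ∀ y : ℤ, w ≤ y → y ≤ w + (k : ℤ) → ¬ D y := by
        intro y h1 h2 hDy
        have hDy' := hupZ t ht0 y hDy
        apply hv.2.1 (v - (y + ((n : ℤ) + 1) * t)) (by omega) (by omega)
        have e : v - (v - (y + ((n : ℤ) + 1) * t)) = y + ((n : ℤ) + 1) * t := by ring
        rw [e]; exact hDy'
      rcases le_or_gt (w - u) ((n : ℤ) - (k : ℤ)) with hsmall | hbig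
      · obtain ⟨j, hj1, hj2, hDj⟩ := hu.2.2 (w - u) hw0 (by omega)
        exact hblock (u + j) (by omega) (by omega) hDj
      · exact hblock (u + ((n : ℤ) + 1)) (by omega) (by omega) (hup u hu.1)
  refine ⟨u, hgood, fun y hy => ?_⟩
  rcases lt_trichotomy y u with h | h | h
  · exact absurd (hcore y u hy hgood h) (by simp)
  · exact h
  · exact absurd (hcore u y hgood hy h) (by simp)


lemma notD_small {n : ℕ} {c : ℝ} (hc : 0 < c) (g : Fin (n + 1) → ℝ) :
    ∃ a : ℤ, ∀ x ≤ a, ¬ (extg n c g x ≤ c) := by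
  obtain ⟨L, hL⟩ : ∃ L : ℝ, ∀ i, L ≤ g i :=
    ⟨Finset.univ.inf' ⟨0, Finset.mem_univ 0⟩ g, fun i => Finset.inf'_le g (Finset.mem_univ i)⟩
  obtain ⟨Q, hQ⟩ := exists_int_lt ((L - c) / c)
  rw [lt_div_iff₀ hc] at hQ
  refine ⟨((n : ℤ) + 1) * Q, fun x hx => ?_⟩
  have hq : x / ((n : ℤ) + 1) ≤ Q := by
    have h1 := Int.ediv_le_ediv (by positivity : (0:ℤ) < (n : ℤ) + 1) hx
    rwa [Int.mul_ediv_cancel_left Q (by positivity)] at h1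
  have h1 : (0:ℤ) < (n : ℤ) + 1 := by positivity
  have h2 := Int.emod_lt_of_pos x h1
  have h3 := Int.emod_nonneg x (by positivity : ((n:ℤ) + 1) ≠ 0)
  rw [extg_apply _ x (by omega)]
  push_neg
  have hcast : ((x / ((n : ℤ) + 1) : ℤ) : ℝ) ≤ (Q : ℝ) := by exact_mod_cast hq
  have := hL (⟨(x % ((n : ℤ) + 1)).toNat, by omega⟩ : Fin (n + 1))
  nlinarith

lemma D_big {n : ℕ} {c : ℝ} (hc : 0 < c) (g : Fin (n + 1) → ℝ) :
    ∃ b : ℤ, ∀ x, b ≤ x → extg n c g x ≤ c := by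
  obtain ⟨U, hU⟩ : ∃ U : ℝ, ∀ i, g i ≤ U :=
    ⟨Finset.univ.sup' ⟨0, Finset.mem_univ 0⟩ g, fun i => Finset.le_sup' g (Finset.mem_univ i)⟩
  obtain ⟨R, hR⟩ := exists_int_gt ((U - c) / c)
  rw [div_lt_iff₀ hc] at hR
  refine ⟨((n : ℤ) + 1) * R, fun x hx => ?_⟩
  have hq : R ≤ x / ((n : ℤ) + 1) := by
    have h1 := Int.ediv_le_ediv (by positivity : (0:ℤ) < (n : ℤ) + 1) hx
    rwa [Int.mul_ediv_cancel_left R (by positivity)] at h1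
  have h1 : (0:ℤ) < (n : ℤ) + 1 := by positivity
  have h2 := Int.emod_lt_of_pos x h1
  have h3 := Int.emod_nonneg x (by positivity : ((n:ℤ) + 1) ≠ 0)
  rw [extg_apply _ x (by omega)]
  have hcast : (R : ℝ) ≤ ((x / ((n : ℤ) + 1) : ℤ) : ℝ) := by exact_mod_cast hq
  have := hU (⟨(x % ((n : ℤ) + 1)).toNat, by omega⟩ : Fin (n + 1))
  nlinarith

lemma extg_step_skel {n : ℕ} {c m : ℝ} {k : ℕ} {g : Fin (n + 1) → ℝ}
    (hm : 0 ≤ m) (hg : IsSkeletal c m k g) (x : ℤ) :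
    extg n c g (x + 1) ≤ extg n c g x + m := by
  refine extg_step hg.1 hg.2.1 ?_ hm x
  exact hg.2.2.1 (Fin.last n) (by simp [Fin.val_last])

/-- The bridge: skeletality of the `t`-shift is the combinatorial condition at `t`. -/
lemma skeletal_shift_iff {n : ℕ} {c m : ℝ} (hc : 0 < c) {g : Fin (n + 1) → ℝ}
    (hstep : ∀ x : ℤ, extg n c g (x + 1) ≤ extg n c g x + m) {k : ℕ} (hk : k ≤ n) (t : ℤ) :
    IsSkeletal c m k (fun i : Fin (n + 1) => extg n c g (t + ((i : ℕ) : ℤ))) ↔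
      GoodAt n k (fun x => extg n c g x ≤ c) t := by
  constructor
  · rintro ⟨hA, h0, h1, h2⟩
    refine ⟨?_, ?_, ?_⟩
    · simpa using h0
    · intro j hj1 hjk hDj
      have hper : extg n c g ((t - j) + ((n : ℤ) + 1)) = extg n c g (t - j) - c :=
        extg_period g (t - j)
      set jn := j.toNat with hjn
      have hj' : (jn : ℤ) = j := Int.toNat_of_nonneg (by omega)
      have hjle : jn ≤ n + 1 := by omega
      have hjge : 1 ≤ jn := by omega
      have hik : n - k ≤ n + 1 - jn := by omega
      have := h1 ⟨n + 1 - jn, by omega⟩ (by simpa using hik)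
      simp only [] at this
      have e : t + (((n + 1 - jn : ℕ) : ℤ)) = (t - j) + ((n : ℤ) + 1) := by
        push_cast [Nat.cast_sub hjle]
        omega
      rw [e, hper] at this
      linarith
    · intro s hs0 hsn
      push_neg at h2
      obtain ⟨j, hj1, hj2, hj3⟩ := h2 s.toNat (by omega)
      refine ⟨((j : ℕ) : ℤ), by omega, by omega, by simpa using hj3⟩
  · rintro ⟨hD, hB, hF⟩
    refine ⟨?_, ?_, ?_, ?_⟩
    · intro i
      simp only [Fin.val_succ, Fin.coe_castSucc]
      have := hstep (t + ((i : ℕ) : ℤ))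
      have e : (t + ((i : ℕ) : ℤ)) + 1 = t + (((i : ℕ) + 1 : ℕ) : ℤ) := by push_cast; ring
      rwa [e] at this
    · simpa using hD
    · intro i hi
      by_contra hcon
      push_neg at hcon
      have hper : extg n c g ((t + ((i : ℕ) : ℤ) - ((n : ℤ) + 1)) + ((n : ℤ) + 1))
          = extg n c g (t + ((i : ℕ) : ℤ) - ((n : ℤ) + 1)) - c := extg_period g _
      have hval : extg n c g (t + ((i : ℕ) : ℤ) - ((n : ℤ) + 1)) ≤ c := by
        have e : (t + ((i : ℕ) : ℤ) - ((n : ℤ) + 1)) + ((n : ℤ) + 1) = t + ((i : ℕ) : ℤ) := by ring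
        rw [e] at hper
        linarith
      have hiub := i.isLt
      refine hB ((n : ℤ) + 1 - ((i : ℕ) : ℤ)) (by omega) (by omega) ?_
      have e : t - ((n : ℤ) + 1 - ((i : ℕ) : ℤ)) = t + ((i : ℕ) : ℤ) - ((n : ℤ) + 1) := by ring
      rw [e]
      exact hval
    · rintro ⟨s, hsk, hall⟩
      obtain ⟨j, hj1, hj2, hj3⟩ := hF (s : ℤ) (by omega) (by omega)
      have hjn : ((j.toNat : ℕ) : ℤ) = j := Int.toNat_of_nonneg (by omega)
      have hjlt : j.toNat < n + 1 := by omega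
      have := hall ⟨j.toNat, hjlt⟩ (by simp; omega) (by simp; omega)
      simp only [] at this
      rw [hjn] at this
      linarith


/-- Master lemma: each `k`-skeletal vector has a unique `k'`-skeletal vector
reachable by cycling, with a unique shift. -/
lemma existsUnique_skel {n : ℕ} {c m : ℝ} (hc : 0 < c) (hm : 0 ≤ m) {k k' : ℕ}
    (hk : k ≤ n) (hk' : k' ≤ n) {g : Fin (n + 1) → ℝ} (hg : IsSkeletal c m k g) :
    ∃! t : ℤ, IsSkeletal c m k' (cycIter c t g) := by
  have hstep := extg_step_skel hm hg
  have hEU := existsUnique_goodAt n k' hk' (fun x => extg n c g x ≤ c)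
    (fun x hx => by
      have := extg_period (c := c) g x
      linarith)
    (notD_small hc g) (D_big hc g)
  obtain ⟨u, hu, huniq⟩ := hEU
  refine ⟨u, ?_, fun y hy => ?_⟩
  · show IsSkeletal c m k' (cycIter c u g)
    rw [cycIter_shift]
    exact (skeletal_shift_iff hc hstep hk' u).mpr hu
  · have hy' : IsSkeletal c m k' (cycIter c y g) := hy
    rw [cycIter_shift] at hy'
    exact huniq y ((skeletal_shift_iff hc hstep hk' y).mp hy')

open scoped Classical in
/-- The bijection: send `g` to the `k'`-skeletal vector in its cycling class. -/
noncomputable def phi (n : ℕ) (c m : ℝ) (k' : ℕ) (g : Fin (n + 1) → ℝ) : Fin (n + 1) → ℝ :=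
  if h : ∃ t : ℤ, IsSkeletal c m k' (cycIter c t g) then cycIter c h.choose g else g

lemma phi_eq {n : ℕ} {c m : ℝ} {k' : ℕ} {g : Fin (n + 1) → ℝ}
    (h : ∃ t : ℤ, IsSkeletal c m k' (cycIter c t g)) :
    phi n c m k' g = cycIter c h.choose g := by
  unfold phi
  exact dif_pos h

end Stmt8Aux

/-- for all `k, k'`, there is a bijection between `k`-skeletal and
`k'`-skeletal area vectors sending each vector to the unique `k'`-skeletal vector
in its `∼`-equivalence class. -/
theorem stmt8 (n : ℕ) (G : AddSubgroup ℝ) (c m : ℝ)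
    (hcG : c ∈ G) (hmG : m ∈ G) (hc : 0 < c) (hm : 0 ≤ m)
    (k k' : ℕ) (hk : k ≤ n) (hk' : k' ≤ n) :
    ∃ φ : (Fin (n + 1) → ℝ) → (Fin (n + 1) → ℝ),
      Set.BijOn φ {g | (∀ i, g i ∈ G) ∧ IsSkeletal c m k g}
        {g | (∀ i, g i ∈ G) ∧ IsSkeletal c m k' g} ∧
      ∀ g : Fin (n + 1) → ℝ, (∀ i, g i ∈ G) → IsSkeletal c m k g →
        (∃ j : ℤ, φ g = cycIter c j g) ∧ IsSkeletal c m k' (φ g) := by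
  classical
  refine ⟨Stmt8Aux.phi n c m k', ⟨?_, ?_, ?_⟩, ?_⟩
  · -- MapsTo
    rintro g ⟨hgG, hgsk⟩
    have h : ∃ t : ℤ, IsSkeletal c m k' (cycIter c t g) :=
      (Stmt8Aux.existsUnique_skel hc hm hk hk' hgsk).exists
    rw [Set.mem_setOf_eq, Stmt8Aux.phi_eq h]
    exact ⟨fun i => Stmt8Aux.cycIter_memG hgG hcG _ i, h.choose_spec⟩
  · -- InjOn
    rintro g₁ ⟨hg₁G, hg₁sk⟩ g₂ ⟨hg₂G, hg₂sk⟩ heq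
    have h₁ : ∃ t : ℤ, IsSkeletal c m k' (cycIter c t g₁) :=
      (Stmt8Aux.existsUnique_skel hc hm hk hk' hg₁sk).exists
    have h₂ : ∃ t : ℤ, IsSkeletal c m k' (cycIter c t g₂) :=
      (Stmt8Aux.existsUnique_skel hc hm hk hk' hg₂sk).exists
    rw [Stmt8Aux.phi_eq h₁, Stmt8Aux.phi_eq h₂] at heq
    set t₁ := h₁.choose
    set t₂ := h₂.choose
    have hg₂eq : g₂ = cycIter c (-t₂ + t₁) g₁ := by
      calc g₂ = cycIter c (-t₂) (cycIter c t₂ g₂) := by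
                rw [Stmt8Aux.cycIter_comp, neg_add_cancel, Stmt8Aux.cycIter_zero]
        _ = cycIter c (-t₂) (cycIter c t₁ g₁) := by rw [heq]
        _ = cycIter c (-t₂ + t₁) g₁ := Stmt8Aux.cycIter_comp g₁ _ _
    have hEU := Stmt8Aux.existsUnique_skel hc hm hk hk hg₁sk
    have e0 : IsSkeletal c m k (cycIter c 0 g₁) := by
      rw [Stmt8Aux.cycIter_zero]; exact hg₁sk
    have e1 : IsSkeletal c m k (cycIter c (-t₂ + t₁) g₁) := by
      rw [← hg₂eq]; exact hg₂sk
    have hz : (-t₂ + t₁ : ℤ) = 0 := hEU.unique e1 e0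
    rw [hg₂eq, hz, Stmt8Aux.cycIter_zero]
  · -- SurjOn
    rintro h ⟨hhG, hhsk⟩
    obtain ⟨t, ht⟩ := (Stmt8Aux.existsUnique_skel hc hm hk' hk hhsk).exists
    refine ⟨cycIter c t h, ⟨fun i => Stmt8Aux.cycIter_memG hhG hcG _ _, ht⟩, ?_⟩
    have h1 : ∃ s : ℤ, IsSkeletal c m k' (cycIter c s (cycIter c t h)) :=
      (Stmt8Aux.existsUnique_skel hc hm hk hk' ht).exists
    rw [Stmt8Aux.phi_eq h1]
    have hs1 : IsSkeletal c m k' (cycIter c h1.choose (cycIter c t h)) := h1.choose_spec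
    rw [Stmt8Aux.cycIter_comp] at hs1 ⊢
    have hEU := Stmt8Aux.existsUnique_skel hc hm hk' hk' hhsk
    have e0 : IsSkeletal c m k' (cycIter c 0 h) := by
      rw [Stmt8Aux.cycIter_zero]; exact hhsk
    have hz : (h1.choose + t : ℤ) = 0 := hEU.unique hs1 e0
    rw [hz, Stmt8Aux.cycIter_zero]
  · -- spec
    intro g hgG hgsk
    have h : ∃ t : ℤ, IsSkeletal c m k' (cycIter c t g) :=
      (Stmt8Aux.existsUnique_skel hc hm hk hk' hgsk).exists
    rw [Stmt8Aux.phi_eq h]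
    exact ⟨⟨h.choose, rfl⟩, h.choose_spec⟩
end

section
/- Take 𝒢 = ℤ and let c, m be positive integers. The number of lattice paths from (0,0) to (mn + c − 1, n), using unit north and east steps, that stay inside the trapezoid {(x,y) : 0 ≤ y ≤ n, 0 ≤ x ≤ my + c − 1} equals c/((m+1)n + c) · binom((m+1)n + c, n). -/
/-- The set of monotone lattice-path encodings. -/
def latS (m c n : ℕ) : Set (Fin n → ℕ) :=
  {x | Monotone x ∧ ∀ i : Fin n, x i < m * (i : ℕ) + c}

/-- The recursive count. -/
def latG (m : ℕ) : ℕ → ℕ → ℕ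
  | 0, _ => 1
  | _ + 1, 0 => 0
  | n + 1, c + 1 => latG m (n + 1) c + latG m n (c + m + 1)
  termination_by n c => (n, c)

lemma latS_finite (m c n : ℕ) : (latS m c n).Finite := by
  apply Set.Finite.subset (Set.Finite.pi' (t := fun _ : Fin n => Set.Iio (m * n + c))
    (fun _ => Set.finite_Iio _))
  rintro x ⟨-, hx⟩ i
  have h1 := hx i
  have h2 : (i : ℕ) < n := i.isLt
  simp only [Set.mem_Iio]
  nlinarith

lemma mono_cons_zero {n : ℕ} {y : Fin n → ℕ} (hy : Monotone y) :
    Monotone (Fin.cons 0 y : Fin (n + 1) → ℕ) := by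
  intro i j hij
  rcases Fin.eq_zero_or_eq_succ i with rfl | ⟨k, rfl⟩
  · simp
  · rcases Fin.eq_zero_or_eq_succ j with rfl | ⟨l, rfl⟩
    · exact absurd (Fin.le_zero_iff.mp hij) (Fin.succ_ne_zero k)
    · simp only [Fin.cons_succ]
      exact hy (Fin.succ_le_succ_iff.mp hij)

lemma latS_card (m : ℕ) : ∀ n c, (latS m c n).ncard = latG m n c := by
  intro n
  induction n with
  | zero =>
    intro c
    have huniv : latS m c 0 = Set.univ :=
      Set.eq_univ_of_forall (fun x => ⟨fun i _ _ => i.elim0, fun i => i.elim0⟩)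
    rw [huniv, Set.ncard_univ, Nat.card_unique, latG]
  | succ n ih =>
    intro c
    induction c with
    | zero =>
      have hempty : latS m 0 (n + 1) = ∅ := by
        apply Set.eq_empty_iff_forall_notMem.mpr
        rintro x ⟨-, h⟩
        have := h 0
        simp at this
      rw [hempty, Set.ncard_empty, latG]
    | succ c ihc =>
      set A : Set (Fin (n + 1) → ℕ) := {x ∈ latS m (c + 1) (n + 1) | x 0 = 0} with hA
      set B : Set (Fin (n + 1) → ℕ) := {x ∈ latS m (c + 1) (n + 1) | x 0 ≠ 0} with hB
      have hunion : latS m (c + 1) (n + 1) = A ∪ B := by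
        ext x
        by_cases h : x 0 = 0 <;> simp [hA, hB, h]
      have hdisj : Disjoint A B := by
        rw [Set.disjoint_left]
        rintro x ⟨-, h0⟩ ⟨-, h1⟩; exact h1 h0
      have hAfin : A.Finite := (latS_finite _ _ _).subset (fun x hx => hx.1)
      have hBfin : B.Finite := (latS_finite _ _ _).subset (fun x hx => hx.1)
      have hAcard : A.ncard = latG m n (c + m + 1) := by
        have himg : A = (fun y : Fin n → ℕ => Fin.cons 0 y) '' latS m (c + m + 1) n := by
          ext x
          constructor
          · rintro ⟨⟨hmono, hbound⟩, h0⟩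
            refine ⟨fun j => x j.succ, ⟨hmono.comp Fin.strictMono_succ.monotone, ?_⟩, ?_⟩
            · intro j
              show x j.succ < m * (j : ℕ) + (c + m + 1)
              have := hbound j.succ
              simp only [Fin.val_succ] at this
              have hexp : m * ((j : ℕ) + 1) + (c + 1) = m * (j : ℕ) + (c + m + 1) := by ring
              omega
            · funext i
              rcases Fin.eq_zero_or_eq_succ i with rfl | ⟨k, rfl⟩
              · simp [h0]
              · simp
          · rintro ⟨y, ⟨hmono, hbound⟩, rfl⟩
            refine ⟨⟨mono_cons_zero hmono, ?_⟩, by simp⟩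
            intro i
            rcases Fin.eq_zero_or_eq_succ i with rfl | ⟨k, rfl⟩
            · simp
            · have := hbound k
              simp only [Fin.cons_succ, Fin.val_succ]
              have hexp : m * ((k : ℕ) + 1) + (c + 1) = m * (k : ℕ) + (c + m + 1) := by ring
              omega
        rw [himg, Set.ncard_image_of_injective _ (fun a b hab => by
          funext i
          have := congrFun hab i.succ
          simpa using this), ih (c + m + 1)]
      have hBcard : B.ncard = latG m (n + 1) c := by
        have himg : B = (fun y : Fin (n + 1) → ℕ => fun i => y i + 1) '' latS m c (n + 1) := by
          ext x
          constructor
          · rintro ⟨⟨hmono, hbound⟩, h0⟩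
            have hpos : ∀ i, 1 ≤ x i := by
              intro i
              have : x 0 ≤ x i := hmono (Fin.zero_le i)
              omega
            refine ⟨fun i => x i - 1, ⟨?_, ?_⟩, ?_⟩
            · intro a b hab
              show x a - 1 ≤ x b - 1
              have h1 := hmono hab
              have h2 := hpos a; have h3 := hpos b
              omega
            · intro i
              show x i - 1 < m * (i : ℕ) + c
              have h1 := hbound i; have h2 := hpos i; omega
            · funext i
              show x i - 1 + 1 = x i
              have := hpos i; omega
          · rintro ⟨y, ⟨hmono, hbound⟩, rfl⟩
            refine ⟨⟨fun a b hab => ?_, ?_⟩, ?_⟩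
            · show y a + 1 ≤ y b + 1
              have := hmono hab; omega
            · intro i
              show y i + 1 < m * (i : ℕ) + (c + 1)
              have := hbound i; omega
            · show y 0 + 1 ≠ 0
              omega
        rw [himg, Set.ncard_image_of_injective _ (fun a b hab => by
          funext i
          have h : a i + 1 = b i + 1 := congrFun hab i
          omega), ihc]
      rw [hunion, Set.ncard_union_eq hdisj hAfin hBfin, hAcard, hBcard, latG]
      omega

lemma latG_mul (m : ℕ) : ∀ n c, latG m n c * ((m + 1) * n + c)
    = c * Nat.choose ((m + 1) * n + c) n := by
  intro n
  induction n with
  | zero => intro c; simp [latG]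
  | succ n ih =>
    intro c
    induction c with
    | zero => simp [latG]
    | succ c ihc =>
      set D := (m + 1) * (n + 1) + c with hD
      have hD' : (m + 1) * n + (c + m + 1) = D := by rw [hD]; ring
      have hB := ihc
      have hA := ih (c + m + 1)
      rw [hD'] at hA
      have hrec : latG m (n + 1) (c + 1) = latG m (n + 1) c + latG m n (c + m + 1) := by
        rw [latG]
      have hexp : (m + 1) * (n + 1) + (c + 1) = D + 1 := by rw [hD]; ring
      rw [hexp, hrec]
      have hDpos : 0 < D := by rw [hD]; positivity
      have key : ((latG m (n + 1) c + latG m n (c + m + 1) : ℕ) : ℤ) * ((D : ℤ) + 1)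
          = ((c : ℤ) + 1) * (Nat.choose (D + 1) (n + 1) : ℤ) := by
        apply mul_right_cancel₀ (b := (D : ℤ)) (by exact_mod_cast hDpos.ne')
        have hPz : (Nat.choose (D + 1) (n + 1) : ℤ)
            = (Nat.choose D n : ℤ) + (Nat.choose D (n + 1) : ℤ) := by
          exact_mod_cast Nat.choose_succ_succ' D n
        have hSz : ((D : ℤ) + 1) * (Nat.choose D n : ℤ)
            = (Nat.choose (D + 1) (n + 1) : ℤ) * ((n : ℤ) + 1) := by
          exact_mod_cast Nat.add_one_mul_choose_eq D n
        have hBz : (latG m (n + 1) c : ℤ) * (D : ℤ)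
            = (c : ℤ) * (Nat.choose D (n + 1) : ℤ) := by exact_mod_cast hB
        have hAz : (latG m n (c + m + 1) : ℤ) * (D : ℤ)
            = ((c : ℤ) + (m : ℤ) + 1) * (Nat.choose D n : ℤ) := by exact_mod_cast hA
        have hDz : (D : ℤ) = ((m : ℤ) + 1) * ((n : ℤ) + 1) + (c : ℤ) := by
          exact_mod_cast hD
        push_cast
        linear_combination ((D : ℤ) + 1) * hBz + ((D : ℤ) + 1) * hAz
          - (c : ℤ) * ((D : ℤ) + 1) * hPz + ((m : ℤ) + 1) * hSz
          - (Nat.choose (D + 1) (n + 1) : ℤ) * hDz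
      exact_mod_cast key

/-- the number of lattice paths in the trapezoid
`{(x,y) : 0 ≤ y ≤ n, 0 ≤ x ≤ my + c - 1}` from `(0,0)` to `(mn+c-1, n)`, encoded as
weakly increasing sequences `x : Fin n → ℕ` with `x i < m·i + c`, equals
`c/((m+1)n + c)·binom((m+1)n + c, n)` (stated multiplied out). -/
theorem stmt10 (n : ℕ) (c m : ℕ) (hc : 0 < c) (hm : 0 < m) :
    {x : Fin n → ℕ | Monotone x ∧ ∀ i : Fin n, x i < m * (i : ℕ) + c}.ncard *
        ((m + 1) * n + c)
      = c * Nat.choose ((m + 1) * n + c) n := by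
  have hset : {x : Fin n → ℕ | Monotone x ∧ ∀ i : Fin n, x i < m * (i : ℕ) + c}
      = latS m c n := rfl
  rw [hset, latS_card, latG_mul]
end

section
/- Let T be an equivalence class of ∼ in S. Then all elements of T have the same multiset of run lengths: for every h ∈ T, run(h) = run(g⁺), where g⁺ is the unique Dyck vector in T. -/
open Classical in
/-- The set of indices starting a run (runs: maximal blocks with `x (t+1) = x t + m`). -/
noncomputable def runStarts {n : ℕ} (m : ℝ) (x : Fin n → ℝ) : Finset (Fin n) :=
  Finset.univ.filter (fun i : Fin n => (i : ℕ) = 0 ∨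
    x i ≠ x ⟨(i : ℕ) - 1, Nat.lt_of_le_of_lt (Nat.sub_le _ _) i.isLt⟩ + m)

open Classical in
/-- The length of the run containing positions weakly after `i`. -/
noncomputable def runLen {n : ℕ} (m : ℝ) (x : Fin n → ℝ) (i : Fin n) : ℕ :=
  (Finset.univ.filter (fun j : Fin n => i ≤ j ∧
    ∀ t : ℕ, ∀ _h1 : (i : ℕ) ≤ t, ∀ h2 : t < (j : ℕ),
      x ⟨t + 1, Nat.lt_of_le_of_lt (Nat.succ_le_of_lt h2) j.isLt⟩
        = x ⟨t, Nat.lt_trans h2 j.isLt⟩ + m)).card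

/-- The multiset of run lengths of `x`. -/
noncomputable def runMultiset {n : ℕ} (m : ℝ) (x : Fin n → ℝ) : Multiset ℕ :=
  (runStarts m x).val.map (runLen m x)

/-!
Cycling only rotates the cyclic word of steps of `x`: the positions `i` with `x (i + 1) = x i + m`,
read cyclically so that `x 0 - c` follows the last entry. For a vector of `S` the wrap-around
position is never a step, because `x 0 - c ≤ 0 < x (Fin.last n) ≤ x (Fin.last n) + m`. Hence
the runs of such a vector are exactly the maximal blocks of steps of its cyclic word, and a
rotation of the word only permutes these blocks.
-/

open Fin.CommRing

section CyclicSteps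

variable {n : ℕ} (c m : ℝ)

theorem Fin.neg_one_eq_last : (-1 : Fin (n + 1)) = Fin.last n :=
  Fin.ext (by rw [Fin.coe_neg_one, Fin.val_last])

theorem Fin.add_one_eq_zero_iff_eq_last {i : Fin (n + 1)} : i + 1 = 0 ↔ i = Fin.last n := by
  rw [← eq_sub_iff_add_eq, zero_sub, Fin.neg_one_eq_last]

theorem Fin.val_add_natCast_of_lt {i : Fin (n + 1)} {k : ℕ} (h : (i : ℕ) + k < n + 1) :
    ((i + k : Fin (n + 1)) : ℕ) = i + k := by
  rw [Fin.val_add, Fin.val_natCast, Nat.mod_eq_of_lt (show k < n + 1 by omega), Nat.mod_eq_of_lt h]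

theorem Fin.add_natCast_sub_val_eq_last (i : Fin (n + 1)) :
    i + ((n - i : ℕ) : Fin (n + 1)) = Fin.last n :=
  Fin.ext (by rw [Fin.val_add_natCast_of_lt (by omega), Fin.val_last]; omega)

theorem cyc_apply (x : Fin (n + 1) → ℝ) (i : Fin (n + 1)) :
    cyc c x i = x (i + 1) - if i = Fin.last n then c else 0 := by
  rcases (Fin.le_last i).eq_or_lt with rfl | hi
  · simp [cyc, Fin.last_add_one]
  · have hi' : (i : ℕ) + 1 < n + 1 := by simpa [Fin.lt_def] using hi
    simp only [cyc, dif_pos hi', if_neg hi.ne, sub_zero]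
    exact congrArg x (Fin.ext (Fin.val_add_one_of_lt hi).symm)

theorem cycInv_apply (x : Fin (n + 1) → ℝ) (i : Fin (n + 1)) :
    cycInv c x i = x (i - 1) + if i = 0 then c else 0 := by
  rcases eq_or_ne i 0 with rfl | hi
  · simp [cycInv, Fin.neg_one_eq_last]
  · have hi0 : 0 < (i : ℕ) := Nat.pos_of_ne_zero (Fin.val_ne_zero_iff.mpr hi)
    simp only [cycInv, if_pos hi0, if_neg hi, add_zero]
    exact congrArg x (Fin.ext (by simp [Fin.coe_sub_one, hi]))

theorem cyc_cycInv (x : Fin (n + 1) → ℝ) : cyc c (cycInv c x) = x := by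
  funext i
  simp [cyc_apply, cycInv_apply, Fin.add_one_eq_zero_iff_eq_last]

/-- At `Fin.last n` this compares `x 0 - c` with `x (Fin.last n)`. -/
def IsCycStep (x : Fin (n + 1) → ℝ) (i : Fin (n + 1)) : Prop :=
  cyc c x i = x i + m

theorem isCycStep_cyc (x : Fin (n + 1) → ℝ) (i : Fin (n + 1)) :
    IsCycStep c m (cyc c x) i ↔ IsCycStep c m x (i + 1) := by
  simp only [IsCycStep, cyc_apply]
  constructor <;> intro h <;> linarith

theorem isCycStep_cycInv (x : Fin (n + 1) → ℝ) (i : Fin (n + 1)) :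
    IsCycStep c m (cycInv c x) i ↔ IsCycStep c m x (i - 1) := by
  conv_rhs => rw [← cyc_cycInv c x, isCycStep_cyc, sub_add_cancel]

theorem isCycStep_iterate_cyc (x : Fin (n + 1) → ℝ) (k : ℕ) (i : Fin (n + 1)) :
    IsCycStep c m ((cyc c)^[k] x) i ↔ IsCycStep c m x (i + k) := by
  induction k generalizing i with
  | zero => simp
  | succ k ih =>
    rw [Function.iterate_succ_apply', isCycStep_cyc, ih, Nat.cast_succ, add_assoc,
      add_comm (1 : Fin (n + 1))]

theorem isCycStep_iterate_cycInv (x : Fin (n + 1) → ℝ) (k : ℕ) (i : Fin (n + 1)) :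
    IsCycStep c m ((cycInv c)^[k] x) i ↔ IsCycStep c m x (i - k) := by
  induction k generalizing i with
  | zero => simp
  | succ k ih =>
    rw [Function.iterate_succ_apply', isCycStep_cycInv, ih, Nat.cast_succ, sub_sub, add_comm 1]

theorem isCycStep_cycIter (x : Fin (n + 1) → ℝ) (j : ℤ) (i : Fin (n + 1)) :
    IsCycStep c m (cycIter c j x) i ↔ IsCycStep c m x (i + j) := by
  unfold cycIter
  split_ifs with hj
  · rw [isCycStep_iterate_cyc, ← Int.cast_natCast, Int.toNat_of_nonneg hj]
  · rw [isCycStep_iterate_cycInv, ← Int.cast_natCast, Int.toNat_of_nonneg (by omega), Int.cast_neg,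
      sub_neg_eq_add]

theorem isCycStep_mk_iff {x : Fin (n + 1) → ℝ} {t : ℕ} (ht : t < n) :
    IsCycStep c m x ⟨t, by omega⟩ ↔ x ⟨t + 1, by omega⟩ = x ⟨t, by omega⟩ + m := by
  simp only [IsCycStep, cyc, dif_pos (show t + 1 < n + 1 by omega)]

theorem not_isCycStep_last (hm : 0 ≤ m) {x : Fin (n + 1) → ℝ} (h0 : x 0 ≤ c)
    (hlast : 0 < x (Fin.last n)) : ¬ IsCycStep c m x (Fin.last n) := by
  rw [IsCycStep, cyc_apply, Fin.last_add_one, if_pos rfl]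
  intro h
  linarith

end CyclicSteps

section Runs

variable {n : ℕ} (c m : ℝ) {x y : Fin (n + 1) → ℝ}

theorem mem_runStarts_iff (hx : ¬ IsCycStep c m x (Fin.last n)) (i : Fin (n + 1)) :
    i ∈ runStarts m x ↔ ¬ IsCycStep c m x (i - 1) := by
  rcases eq_or_ne i 0 with rfl | hi
  · simp [runStarts, Fin.neg_one_eq_last, hx]
  · have hi0 : 0 < (i : ℕ) := Nat.pos_of_ne_zero (Fin.val_ne_zero_iff.mpr hi)
    have hpred : i - 1 = ⟨i - 1, by omega⟩ := Fin.ext (by simp [Fin.coe_sub_one, hi])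
    rw [hpred, isCycStep_mk_iff c m (by omega)]
    simp [runStarts, hi, Nat.sub_add_cancel hi0]

theorem runLen_eq_of_isCycStep (hx : ¬ IsCycStep c m x (Fin.last n)) (i : Fin (n + 1)) (K : ℕ)
    (hK : ¬ IsCycStep c m x (i + K)) (hlt : ∀ k < K, IsCycStep c m x (i + k)) :
    runLen m x i = K + 1 := by
  have hiK : (i : ℕ) + K ≤ n := by
    by_contra! h
    exact hx (Fin.add_natCast_sub_val_eq_last i ▸ hlt (n - i) (by omega))
  have hstep : ∀ t (h1 : (i : ℕ) ≤ t) (h2 : t < n),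
      IsCycStep c m x (i + (t - i : ℕ)) ↔ x ⟨t + 1, by omega⟩ = x ⟨t, by omega⟩ + m := by
    intro t h1 h2
    rw [show i + ((t - i : ℕ) : Fin (n + 1)) = ⟨t, by omega⟩ from
      Fin.ext ((Fin.val_add_natCast_of_lt (by omega)).trans (Nat.add_sub_cancel' h1))]
    exact isCycStep_mk_iff c m h2
  have hrun : runLen m x i = (Finset.Icc i ⟨i + K, by omega⟩).card := by
    unfold runLen
    congr 1
    ext j
    simp only [Finset.mem_filter, Finset.mem_univ, true_and, Finset.mem_Icc, Fin.le_def]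
    refine and_congr_right fun hij => ?_
    constructor
    · intro hsteps
      by_contra! hjK
      have hstepK := (hstep (i + K) (by omega) (by omega)).mpr (hsteps (i + K) (by omega) hjK)
      exact hK (by simpa using hstepK)
    · intro hjK t h1 h2
      exact (hstep t h1 (by omega)).mp (hlt (t - i) (by omega))
  rw [hrun, Fin.card_Icc]
  show (i : ℕ) + K + 1 - i = K + 1
  omega

theorem runLen_eq_of_isCycStep_iff (hx : ¬ IsCycStep c m x (Fin.last n))
    (hy : ¬ IsCycStep c m y (Fin.last n)) (a : Fin (n + 1))
    (hxy : ∀ i, IsCycStep c m x i ↔ IsCycStep c m y (i + a)) (i : Fin (n + 1)) :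
    runLen m x i = runLen m y (i + a) := by
  classical
  have hex : ∃ k : ℕ, ¬ IsCycStep c m x (i + k) :=
    ⟨n - i, Fin.add_natCast_sub_val_eq_last i ▸ hx⟩
  have hshift (k : ℕ) : IsCycStep c m x (i + k) ↔ IsCycStep c m y (i + a + k) := by
    rw [hxy, add_right_comm]
  have hmin : ∀ k < Nat.find hex, IsCycStep c m x (i + k) :=
    fun k hk => not_not.mp (Nat.find_min hex hk)
  rw [runLen_eq_of_isCycStep c m hx i _ (Nat.find_spec hex) hmin,
    runLen_eq_of_isCycStep c m hy (i + a) _ ((hshift _).not.mp (Nat.find_spec hex))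
      fun k hk => (hshift k).mp (hmin k hk)]

theorem runMultiset_eq_of_isCycStep_iff (hx : ¬ IsCycStep c m x (Fin.last n))
    (hy : ¬ IsCycStep c m y (Fin.last n)) (a : Fin (n + 1))
    (hxy : ∀ i, IsCycStep c m x i ↔ IsCycStep c m y (i + a)) :
    runMultiset m x = runMultiset m y := by
  have hstarts : (runStarts m x).map (Equiv.addRight a).toEmbedding = runStarts m y := by
    ext i
    rw [Finset.mem_map_equiv, mem_runStarts_iff c m hx, mem_runStarts_iff c m hy, hxy,
      show (Equiv.addRight a).symm i - 1 + a = i - 1 by simp; ring]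
  rw [runMultiset, runMultiset, ← hstarts, Finset.map_val, Multiset.map_map]
  exact Multiset.map_congr rfl fun i _ => runLen_eq_of_isCycStep_iff c m hx hy a hxy i

end Runs

theorem MemS.not_isCycStep_last {n : ℕ} {G : AddSubgroup ℝ} {c m : ℝ} (hm : 0 ≤ m)
    {x : Fin (n + 1) → ℝ} (hx : MemS G c m x) : ¬ IsCycStep c m x (Fin.last n) :=
  _root_.not_isCycStep_last c m hm hx.2.2.1 hx.2.2.2

theorem stmt14_general (n : ℕ) (G : AddSubgroup ℝ) (c m : ℝ)
    (hm : 0 ≤ m)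
    (gplus : Fin (n + 1) → ℝ) (hgplus : MemS G c m gplus)
    (h : Fin (n + 1) → ℝ) (hh : MemS G c m h) (hsim : ∃ j : ℤ, h = cycIter c j gplus) :
    runMultiset m h = runMultiset m gplus := by
  obtain ⟨j, rfl⟩ := hsim
  exact runMultiset_eq_of_isCycStep_iff c m (hh.not_isCycStep_last hm)
    (hgplus.not_isCycStep_last hm) j (isCycStep_cycIter c m gplus j)

/-- all elements of an equivalence class of `∼` in `S` have the same
multiset of run lengths as the unique Dyck vector `g⁺` of the class. -/
theorem stmt14 (n : ℕ) (G : AddSubgroup ℝ) (c m : ℝ)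
    (hcG : c ∈ G) (hmG : m ∈ G) (hc : 0 < c) (hm : 0 ≤ m)
    (gplus : Fin (n + 1) → ℝ) (hgplus : MemS G c m gplus)
    (hDyck : ∀ i, 0 < gplus i)
    (h : Fin (n + 1) → ℝ) (hh : MemS G c m h) (hsim : ∃ j : ℤ, h = cycIter c j gplus) :
    runMultiset m h = runMultiset m gplus :=
  stmt14_general n G c m hm gplus hgplus h hh hsim
end

section
/- Take 𝒢 = ℤ and let c, m be positive integers. The number of functions f : {1,…,n} → ℤ_{≥0} such that, when the values f(1),…,f(n) are sorted into weak increasing order x_0 ≤ x_1 ≤ ⋯ ≤ x_{n-1}, one has x_i ≤ mi + c − 1 for all i, equals c(mn + c)^{n-1}. -/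
open Finset
open scoped Classical


/-- Cycle lemma count: for an `N`-periodic integer sequence with entries `≤ 1`
and period-sum `c > 0`, exactly `c` starting points in `[0,N)` have all
window sums (lengths `1..N`) positive. -/
lemma cycle_count (N : ℕ) (hN : 0 < N) (c : ℤ) (hc : 0 < c) (b : ℕ → ℤ)
    (hb1 : ∀ j, b j ≤ 1) (hper : ∀ j, b (j + N) = b j)
    (hsum : ∑ j ∈ Finset.range N, b j = c) :
    ((((Finset.range N).filter
        (fun s => ∀ ℓ, 1 ≤ ℓ → ℓ ≤ N → 0 < ∑ j ∈ Finset.Ico s (s + ℓ), b j)).card : ℤ)) = c := by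
  set S : ℕ → ℤ := fun k => ∑ j ∈ Finset.range k, b j with hSdef
  have hSper : ∀ k, S (k + N) = S k + c := by
    intro k
    induction k with
    | zero => simpa [hSdef] using hsum
    | succ k ih =>
        have e : k + 1 + N = (k + N) + 1 := by omega
        rw [e]
        simp only [hSdef, Finset.sum_range_succ] at ih ⊢
        rw [hper k]; omega
  have hstep : ∀ k, S (k + 1) ≤ S k + 1 := by
    intro k
    simp only [hSdef, Finset.sum_range_succ]
    have := hb1 k; omega
  have hne : ∀ t : ℕ, (Finset.Icc t (t + N)).Nonempty := fun t => ⟨t, by simp⟩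
  have hne' : ∀ t : ℕ, (Finset.Icc (t + 1) (t + N)).Nonempty :=
    fun t => ⟨t + 1, by simp [Finset.mem_Icc]; omega⟩
  set F : ℕ → ℤ := fun t => (Finset.Icc t (t + N)).inf' (hne t) S with hFdef
  -- F (t+1) equals the inf over the shorter window [t+1, t+N]
  have hFalt : ∀ t, F (t + 1) = (Finset.Icc (t + 1) (t + N)).inf' (hne' t) S := by
    intro t
    apply le_antisymm
    · apply Finset.le_inf'
      intro u hu
      apply Finset.inf'_le
      simp only [Finset.mem_Icc] at hu ⊢
      omega
    · apply Finset.le_inf'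
      intro u hu
      simp only [Finset.mem_Icc] at hu
      by_cases h : u ≤ t + N
      · exact Finset.inf'_le _ (by simp [Finset.mem_Icc]; omega)
      · have hu2 : u = t + 1 + N := by omega
        have : S u = S (t + 1) + c := by rw [hu2]; exact hSper (t + 1)
        have h2 : (Finset.Icc (t + 1) (t + N)).inf' (hne' t) S ≤ S (t + 1) :=
          Finset.inf'_le _ (by simp [Finset.mem_Icc]; omega)
        omega
  have hFrec : ∀ t, F t = min (S t) (F (t + 1)) := by
    intro t
    apply le_antisymm
    · apply le_min
      · exact Finset.inf'_le _ (by simp)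
      · rw [hFalt]
        apply Finset.le_inf'
        intro u hu
        refine Finset.inf'_le _ ?_
        simp only [Finset.mem_Icc] at hu ⊢; omega
    · apply Finset.le_inf'
      intro u hu
      simp only [Finset.mem_Icc] at hu
      rcases eq_or_lt_of_le hu.1 with h | h
      · rw [← h]; exact min_le_left _ _
      · refine le_trans (min_le_right _ _) ?_
        rw [hFalt]
        exact Finset.inf'_le _ (by simp [Finset.mem_Icc]; omega)
  -- monotone and step bounds
  have hFmono : ∀ t, F t ≤ F (t + 1) := by
    intro t; rw [hFrec t]; exact min_le_right _ _
  have hFub : ∀ t, F (t + 1) ≤ S t + 1 := by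
    intro t
    refine le_trans (Finset.inf'_le _ (by simp)) (hstep t)
  -- characterization of good points
  have hgood : ∀ t, (∀ ℓ, 1 ≤ ℓ → ℓ ≤ N → 0 < ∑ j ∈ Finset.Ico t (t + ℓ), b j)
      ↔ S t < F (t + 1) := by
    intro t
    have hwin : ∀ ℓ, ∑ j ∈ Finset.Ico t (t + ℓ), b j = S (t + ℓ) - S t := by
      intro ℓ
      rw [hSdef]
      simp only
      rw [Finset.sum_Ico_eq_sub _ (by omega)]
    constructor
    · intro h
      rw [hFalt]
      rw [Finset.lt_inf'_iff]
      intro u hu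
      simp only [Finset.mem_Icc] at hu
      have := h (u - t) (by omega) (by omega)
      rw [hwin] at this
      have e : t + (u - t) = u := by omega
      rw [e] at this; omega
    · intro h ℓ h1 h2
      rw [hwin]
      have : F (t + 1) ≤ S (t + ℓ) := by
        rw [hFalt]
        exact Finset.inf'_le _ (by simp [Finset.mem_Icc]; omega)
      omega
  have hind : ∀ t, (if (∀ ℓ, 1 ≤ ℓ → ℓ ≤ N → 0 < ∑ j ∈ Finset.Ico t (t + ℓ), b j)
      then (1 : ℤ) else 0) = F (t + 1) - F t := by
    intro t
    by_cases h : ∀ ℓ, 1 ≤ ℓ → ℓ ≤ N → 0 < ∑ j ∈ Finset.Ico t (t + ℓ), b j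
    · rw [if_pos h]
      have h2 : S t < F (t + 1) := (hgood t).1 h
      have h3 : F t = S t := by rw [hFrec t]; omega
      have h4 := hFub t
      omega
    · rw [if_neg h]
      have h2 : ¬ S t < F (t + 1) := fun hh => h ((hgood t).2 hh)
      have h3 : F t = F (t + 1) := by rw [hFrec t]; omega
      omega
  have htel : ∑ t ∈ Finset.range N, (F (t + 1) - F t) = F N - F 0 :=
    Finset.sum_range_sub F N
  have hFN : F N = F 0 + c := by
    apply le_antisymm
    · obtain ⟨u, hu, he⟩ := Finset.exists_mem_eq_inf' (hne 0) S
      have huN : u + N ∈ Finset.Icc N (N + N) := by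
        simp only [Finset.mem_Icc] at hu ⊢; omega
      calc F N ≤ S (u + N) := Finset.inf'_le _ huN
        _ = S u + c := hSper u
        _ = F 0 + c := by rw [hFdef]; simp only; omega
    · obtain ⟨u, hu, he⟩ := Finset.exists_mem_eq_inf' (hne N) S
      simp only [Finset.mem_Icc] at hu
      have h1 : S ((u - N) + N) = S (u - N) + c := hSper (u - N)
      have h2 : u - N + N = u := by omega
      rw [h2] at h1
      have h3 : F 0 ≤ S (u - N) := Finset.inf'_le _ (by simp [Finset.mem_Icc]; omega)
      have he' : F N = S u := he
      omega
  have hcount : ∑ t ∈ Finset.range N, (if (∀ ℓ, 1 ≤ ℓ → ℓ ≤ N →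
      0 < ∑ j ∈ Finset.Ico t (t + ℓ), b j) then (1 : ℤ) else 0) = c := by
    rw [Finset.sum_congr rfl (fun t _ => hind t), htel, hFN]; ring
  rw [← hcount, Finset.card_filter]
  push_cast
  exact Finset.sum_congr rfl fun x _ => by split_ifs <;> rfl


def parkN (n c m : ℕ) (f : Fin n → ℕ) : Prop :=
  ∀ j < n, j < #(Finset.univ.filter (fun i => f i < m * j + c))

lemma parkN_iff {n c m : ℕ} (f : Fin n → ℕ) :
    (∃ σ : Equiv.Perm (Fin n), Monotone (f ∘ σ) ∧ ∀ i : Fin n, f (σ i) < m * (i : ℕ) + c)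
      ↔ parkN n c m f := by
  constructor
  · rintro ⟨σ, hmono, hlt⟩ j hj
    have hsub : (Finset.Iic (⟨j, hj⟩ : Fin n)).image σ
        ⊆ Finset.univ.filter (fun i => f i < m * j + c) := by
      intro x hx
      simp only [Finset.mem_image, Finset.mem_Iic] at hx
      obtain ⟨i, hij, rfl⟩ := hx
      simp only [Finset.mem_filter, Finset.mem_univ, true_and]
      have h1 : f (σ i) ≤ f (σ ⟨j, hj⟩) := hmono hij
      have h2 := hlt ⟨j, hj⟩
      simp only at h2
      omega
    have hcard : #((Finset.Iic (⟨j, hj⟩ : Fin n)).image σ) = j + 1 := by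
      rw [Finset.card_image_of_injective _ σ.injective, Fin.card_Iic]
    have := Finset.card_le_card hsub
    omega
  · intro hp
    refine ⟨Tuple.sort f, Tuple.monotone_sort f, ?_⟩
    intro i
    by_contra hle
    push_neg at hle
    have hsub : Finset.univ.filter (fun x => f x < m * (i : ℕ) + c)
        ⊆ (Finset.Iio i).image (Tuple.sort f) := by
      intro x hx
      simp only [Finset.mem_filter, Finset.mem_univ, true_and] at hx
      simp only [Finset.mem_image, Finset.mem_Iio]
      refine ⟨(Tuple.sort f).symm x, ?_, by simp⟩
      by_contra hge
      push_neg at hge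
      have h1 : f (Tuple.sort f i) ≤ f (Tuple.sort f ((Tuple.sort f).symm x)) :=
        Tuple.monotone_sort f hge
      rw [Equiv.apply_symm_apply] at h1
      omega
    have h2 := Finset.card_le_card hsub
    have h3 : #((Finset.Iio i).image (Tuple.sort f)) = (i : ℕ) := by
      rw [Finset.card_image_of_injective _ (Tuple.sort f).injective, Fin.card_Iio]
    have h4 := hp i i.isLt
    omega

lemma parkN_lt {n c m : ℕ} (hn : 0 < n) (hm : 0 < m) {f : Fin n → ℕ}
    (hf : parkN n c m f) : ∀ i, f i < m * n + c := by
  intro i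
  by_contra hge
  push_neg at hge
  have h1 := hf (n - 1) (by omega)
  have hsub : Finset.univ.filter (fun x => f x < m * (n - 1) + c)
      ⊆ Finset.univ.erase i := by
    intro x hx
    simp only [Finset.mem_filter, Finset.mem_univ, true_and] at hx
    simp only [Finset.mem_erase, Finset.mem_univ, and_true]
    intro h
    subst h
    have : m * (n - 1) + m = m * n := by
      rw [← Nat.mul_succ]; congr 1; omega
    omega
  have h2 := Finset.card_le_card hsub
  rw [Finset.card_erase_of_mem (Finset.mem_univ i), Finset.card_univ, Fintype.card_fin] at h2
  omega


lemma val_neg_one_sub {N : ℕ} [NeZero N] {d : ℕ} (hd : d < N) :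
    ((-1 - (d : ZMod N)) : ZMod N).val = N - 1 - d := by
  have hN : 0 < N := Nat.pos_of_ne_zero (NeZero.ne N)
  have h : ((N - 1 - d : ℕ) : ZMod N) = -1 - (d : ZMod N) := by
    have e : (N - 1 - d) + (1 + d) = N := by omega
    have h2 : ((N - 1 - d : ℕ) : ZMod N) + ((1 + d : ℕ) : ZMod N) = ((N : ℕ) : ZMod N) := by
      rw [← Nat.cast_add, e]
    rw [ZMod.natCast_self] at h2
    push_cast at h2
    linear_combination h2
  rw [← h, ZMod.val_cast_of_lt (by omega)]

lemma neg_one_sub_eq_iff {N : ℕ} [NeZero N] (x : ZMod N) {j : ℕ} (hj : j < N) :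
    (-1 - x).val = j ↔ x = -1 - (j : ZMod N) := by
  constructor
  · intro h
    have h2 : ((((-1 - x : ZMod N)).val : ℕ) : ZMod N) = ((j : ℕ) : ZMod N) := by rw [h]
    rw [ZMod.natCast_rightInverse (-1 - x)] at h2
    linear_combination -h2
  · intro h
    have h2 : -1 - x = ((j : ℕ) : ZMod N) := by rw [h]; ring
    rw [h2, ZMod.val_cast_of_lt hj]

def parkZ (n c m : ℕ) (g : Fin n → ZMod (m * n + c)) : Prop :=
  parkN n c m (fun i => (g i).val)

noncomputable def bfun (n c m : ℕ) (g : Fin n → ZMod (m * n + c)) (j : ℕ) : ℤ :=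
  1 - (m : ℤ) * (#(Finset.univ.filter (fun i => g i = -1 - (j : ZMod (m * n + c)))) : ℤ)

section
variable {n c m : ℕ}

lemma bfun_le_one (g : Fin n → ZMod (m * n + c)) (j : ℕ) : bfun n c m g j ≤ 1 := by
  unfold bfun
  have : (0 : ℤ) ≤ (m : ℤ) * (#(Finset.univ.filter (fun i => g i = -1 - (j : ZMod (m * n + c)))) : ℤ) := by
    positivity
  omega

lemma bfun_periodic (g : Fin n → ZMod (m * n + c)) (j : ℕ) :
    bfun n c m g (j + (m * n + c)) = bfun n c m g j := by
  unfold bfun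
  have h : ((j + (m * n + c) : ℕ) : ZMod (m * n + c)) = (j : ZMod (m * n + c)) := by
    rw [Nat.cast_add, ZMod.natCast_self, add_zero]
  rw [h]

lemma bfun_sum (hc : 0 < c) (g : Fin n → ZMod (m * n + c)) :
    ∑ j ∈ Finset.range (m * n + c), bfun n c m g j = (c : ℤ) := by
  haveI : NeZero (m * n + c) := ⟨by omega⟩
  have hfib : (n : ℕ) = ∑ j ∈ Finset.range (m * n + c),
      #(Finset.univ.filter (fun i : Fin n => (-1 - g i).val = j)) := by
    have := Finset.card_eq_sum_card_fiberwise
      (f := fun i : Fin n => ((-1 - g i : ZMod (m * n + c))).val)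
      (s := Finset.univ) (t := Finset.range (m * n + c))
      (fun i _ => by simp [ZMod.val_lt])
    simpa using this
  have hcongr : ∀ j ∈ Finset.range (m * n + c),
      #(Finset.univ.filter (fun i : Fin n => (-1 - g i).val = j))
        = #(Finset.univ.filter (fun i : Fin n => g i = -1 - (j : ZMod (m * n + c)))) := by
    intro j hj
    simp only [Finset.mem_range] at hj
    apply Finset.card_bij (fun i _ => i) ?_ (fun a b _ _ h => h)
      (fun i hi => ⟨i, by simpa [neg_one_sub_eq_iff _ hj] using hi, rfl⟩)
    intro i hi
    simp only [Finset.mem_filter, Finset.mem_univ, true_and] at hi ⊢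
    exact (neg_one_sub_eq_iff (g i) hj).1 hi
  have hn2 : ∑ j ∈ Finset.range (m * n + c),
      #(Finset.univ.filter (fun i : Fin n => g i = -1 - (j : ZMod (m * n + c)))) = n := by
    rw [← Finset.sum_congr rfl hcongr]
    exact hfib.symm
  unfold bfun
  rw [Finset.sum_sub_distrib, ← Finset.mul_sum, ← Nat.cast_sum, hn2]
  simp only [Finset.sum_const, Finset.card_range, nsmul_eq_mul, mul_one]
  push_cast
  ring
end

lemma neg_one_sub_natCast {N : ℕ} [NeZero N] {d : ℕ} (hd : d < N) :
    ((N - 1 - d : ℕ) : ZMod N) = -1 - (d : ZMod N) := by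
  have hN : 0 < N := Nat.pos_of_ne_zero (NeZero.ne N)
  have e : (N - 1 - d) + (1 + d) = N := by omega
  have h2 : ((N - 1 - d : ℕ) : ZMod N) + ((1 + d : ℕ) : ZMod N) = ((N : ℕ) : ZMod N) := by
    rw [← Nat.cast_add, e]
  rw [ZMod.natCast_self] at h2
  push_cast at h2
  linear_combination h2

section
variable {n c m : ℕ}

lemma bfun_window (hc : 0 < c) (g : Fin n → ZMod (m * n + c)) (s : ZMod (m * n + c))
    {ℓ : ℕ} (hℓ : ℓ ≤ m * n + c) :
    ∑ j ∈ Finset.Ico s.val (s.val + ℓ), bfun n c m g j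
      = (ℓ : ℤ) - (m : ℤ) * (#(Finset.univ.filter
          (fun i => m * n + c - ℓ ≤ ((g i + s)).val)) : ℤ) := by
  haveI : NeZero (m * n + c) := ⟨by omega⟩
  have key : #(Finset.univ.filter (fun i : Fin n => m * n + c - ℓ ≤ ((g i + s)).val))
      = ∑ j ∈ Finset.Ico s.val (s.val + ℓ),
          #(Finset.univ.filter (fun i : Fin n => g i = -1 - (j : ZMod (m * n + c)))) := by
    have hmaps : ∀ i ∈ Finset.univ.filter
        (fun i : Fin n => m * n + c - ℓ ≤ ((g i + s)).val),
        s.val + (m * n + c - 1 - (g i + s).val) ∈ Finset.Ico s.val (s.val + ℓ) := by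
      intro i hi
      simp only [Finset.mem_filter, Finset.mem_univ, true_and] at hi
      have h1 : (g i + s).val < m * n + c := ZMod.val_lt _
      simp only [Finset.mem_Ico]
      omega
    rw [Finset.card_eq_sum_card_fiberwise hmaps]
    apply Finset.sum_congr rfl
    intro j hj
    simp only [Finset.mem_Ico] at hj
    rw [Finset.filter_filter]
    apply congrArg
    ext i
    simp only [Finset.mem_filter, Finset.mem_univ, true_and]
    have h1 : (g i + s).val < m * n + c := ZMod.val_lt _
    have h2 : s.val < m * n + c := ZMod.val_lt s
    have hdlt : j - s.val < m * n + c := by omega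
    have hs : ((s.val : ℕ) : ZMod (m * n + c)) = s := ZMod.natCast_rightInverse s
    have hj_cast : ((j : ℕ) : ZMod (m * n + c))
        = s + ((j - s.val : ℕ) : ZMod (m * n + c)) := by
      have e : s.val + (j - s.val) = j := by omega
      calc ((j : ℕ) : ZMod (m * n + c)) = ((s.val + (j - s.val) : ℕ) : ZMod (m * n + c)) := by
            rw [e]
        _ = ((s.val : ℕ) : ZMod (m * n + c)) + ((j - s.val : ℕ) : ZMod (m * n + c)) :=
            Nat.cast_add _ _
        _ = s + ((j - s.val : ℕ) : ZMod (m * n + c)) := by rw [hs]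
    have step1 : g i = -1 - (j : ZMod (m * n + c))
        ↔ g i + s = -1 - ((j - s.val : ℕ) : ZMod (m * n + c)) := by
      constructor
      · intro h
        rw [h, hj_cast]
        ring
      · intro h
        have h3 : g i + s = -1 - (j : ZMod (m * n + c)) + s := by
          rw [h, hj_cast]; ring
        exact add_right_cancel h3
    have step2 : g i + s = -1 - ((j - s.val : ℕ) : ZMod (m * n + c))
        ↔ (g i + s).val = m * n + c - 1 - (j - s.val) := by
      constructor
      · intro h
        rw [h, val_neg_one_sub hdlt]
      · intro h
        apply ZMod.val_injective
        rw [val_neg_one_sub hdlt, h]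
    have hval : ((s.val : ℕ) : ZMod (m * n + c)).val = s.val := ZMod.val_cast_of_lt h2
    constructor
    · rintro ⟨hge, hj'⟩
      rw [step1, step2]
      simp only [hval] at *
      omega
    · intro h
      rw [step1, step2] at h
      simp only [hval] at *
      constructor <;> omega
  rw [key]
  have hbval : ∀ j, bfun n c m g j = 1 - (m : ℤ)
      * (#(Finset.univ.filter (fun i => g i = -1 - (j : ZMod (m * n + c)))) : ℤ) := fun j => rfl
  rw [Finset.sum_congr rfl (fun j _ => hbval j), Finset.sum_sub_distrib, ← Finset.mul_sum,
    ← Nat.cast_sum]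
  simp only [Finset.sum_const, Nat.card_Ico, nsmul_eq_mul, mul_one]
  congr 2
  omega
end

section
variable {n c m : ℕ}

lemma parkZ_shift_iff (hn : 0 < n) (hc : 0 < c) (hm : 0 < m)
    (g : Fin n → ZMod (m * n + c)) (s : ZMod (m * n + c)) :
    parkZ n c m (fun i => g i + s)
      ↔ ∀ ℓ, 1 ≤ ℓ → ℓ ≤ m * n + c →
          0 < ∑ j ∈ Finset.Ico s.val (s.val + ℓ), bfun n c m g j := by
  haveI : NeZero (m * n + c) := ⟨by omega⟩
  set A : ℕ → ℕ := fun ℓ =>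
    #(Finset.univ.filter (fun i => m * n + c - ℓ ≤ ((g i + s)).val)) with hA
  have hwin : ∀ ℓ, ℓ ≤ m * n + c →
      ∑ j ∈ Finset.Ico s.val (s.val + ℓ), bfun n c m g j
        = (ℓ : ℤ) - (m : ℤ) * (A ℓ : ℤ) := fun ℓ hℓ => bfun_window hc g s hℓ
  have hAmono : ∀ ℓ ℓ', ℓ ≤ ℓ' → A ℓ ≤ A ℓ' := by
    intro ℓ ℓ' h
    apply Finset.card_le_card
    exact Finset.monotone_filter_right _ (fun i hi => by omega)
  have hAle : ∀ ℓ, A ℓ ≤ n := by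
    intro ℓ
    calc A ℓ ≤ #(Finset.univ : Finset (Fin n)) := Finset.card_filter_le _ _
      _ = n := by simp
  have hpark_iff : parkZ n c m (fun i => g i + s)
      ↔ ∀ k, 1 ≤ k → k ≤ n → A (m * k) < k := by
    show (∀ j < n, j < #(Finset.univ.filter (fun i => ((g i + s)).val < m * j + c))) ↔ _
    have hsplit : ∀ j, j < n →
        (#(Finset.univ.filter (fun i => ((g i + s)).val < m * j + c))
          + A (m * (n - j)) = n) := by
      intro j hj
      have heq : Finset.univ.filter (fun i : Fin n => ¬ ((g i + s)).val < m * j + c)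
          = Finset.univ.filter (fun i => m * n + c - m * (n - j) ≤ ((g i + s)).val) := by
        apply Finset.filter_congr
        intro i _
        have hmul : m * (n - j) + m * j = m * n := by
          rw [← Nat.mul_add]
          congr 1
          omega
        constructor
        · intro h; rw [not_lt] at h; omega
        · intro h; rw [not_lt]; omega
      rw [hA]
      simp only
      rw [← heq, Finset.card_filter_add_card_filter_not, Finset.card_univ,
        Fintype.card_fin]
    constructor
    · intro hp k hk1 hkn
      have hj := hp (n - k) (by omega)
      have hs := hsplit (n - k) (by omega)
      have he : n - (n - k) = k := by omega
      rw [he] at hs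
      omega
    · intro hp j hj
      have hs := hsplit j hj
      have hk := hp (n - j) (by omega) (by omega)
      have he : n - (n - j) = j := by omega  -- unused
      omega
  rw [hpark_iff]
  constructor
  · intro hp ℓ h1 hN
    rw [hwin ℓ hN]
    by_cases hcase : m * n < ℓ
    · have h2 : m * A ℓ ≤ m * n := Nat.mul_le_mul_left m (hAle ℓ)
      have h3 : m * A ℓ < ℓ := by omega
      have h4 : ((m * A ℓ : ℕ) : ℤ) < (ℓ : ℤ) := by exact_mod_cast h3
      push_cast at h4
      linarith
    · push_neg at hcase
      obtain ⟨q, r, hqr, hrm⟩ : ∃ q r, m * q + r = ℓ - 1 ∧ r < m :=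
        ⟨(ℓ - 1) / m, (ℓ - 1) % m, Nat.div_add_mod _ _, Nat.mod_lt _ hm⟩
      have hmk : m * (q + 1) = m * q + m := by ring
      have hqn : q < n := by
        apply Nat.lt_of_mul_lt_mul_left (a := m)
        omega
      have hAk := hp (q + 1) (by omega) (by omega)
      have hchain : A ℓ ≤ A (m * (q + 1)) := hAmono _ _ (by omega)
      have h5 : m * A ℓ ≤ m * q := by
        have : A ℓ ≤ q := by omega
        exact Nat.mul_le_mul_left m this
      have h6 : m * A ℓ < ℓ := by omega
      have h7 : ((m * A ℓ : ℕ) : ℤ) < (ℓ : ℤ) := by exact_mod_cast h6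
      push_cast at h7
      linarith
  · intro hp k hk1 hkn
    have hk2 : m * k ≤ m * n := Nat.mul_le_mul_left m hkn
    have hpos := hp (m * k) (Nat.mul_pos hm hk1) (by omega)
    rw [hwin (m * k) (by omega)] at hpos
    have h2 : (m : ℤ) * (A (m * k) : ℤ) < (m : ℤ) * (k : ℤ) := by push_cast at hpos; linarith
    have h3 : (A (m * k) : ℤ) < (k : ℤ) :=
      lt_of_mul_lt_mul_left h2 (by positivity)
    exact_mod_cast h3
end

section
variable {n c m : ℕ}

lemma key_shift [NeZero (m * n + c)] (hn : 0 < n) (hc : 0 < c) (hm : 0 < m)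
    (g : Fin n → ZMod (m * n + c)) :
    #(Finset.univ.filter (fun s : ZMod (m * n + c) => parkZ n c m (fun i => g i + s))) = c := by
  have hcyc := cycle_count (m * n + c) (by omega) (c : ℤ) (by exact_mod_cast hc)
    (bfun n c m g) (bfun_le_one g) (bfun_periodic g) (bfun_sum hc g)
  have hbij : #(Finset.univ.filter (fun s : ZMod (m * n + c) => parkZ n c m (fun i => g i + s)))
      = #((Finset.range (m * n + c)).filter
          (fun s => ∀ ℓ, 1 ≤ ℓ → ℓ ≤ m * n + c →
            0 < ∑ j ∈ Finset.Ico s (s + ℓ), bfun n c m g j)) := by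
    apply Finset.card_bij (fun s _ => s.val)
    · intro s hs
      simp only [Finset.mem_filter, Finset.mem_univ, true_and] at hs
      simp only [Finset.mem_filter, Finset.mem_range]
      exact ⟨ZMod.val_lt s, (parkZ_shift_iff hn hc hm g s).1 hs⟩
    · intro s _ t _ h
      exact ZMod.val_injective _ h
    · intro a ha
      simp only [Finset.mem_filter, Finset.mem_range] at ha
      refine ⟨((a : ℕ) : ZMod (m * n + c)), ?_, ZMod.val_cast_of_lt ha.1⟩
      simp only [Finset.mem_filter, Finset.mem_univ, true_and]
      apply (parkZ_shift_iff hn hc hm g _).2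
      rw [ZMod.val_cast_of_lt ha.1]
      exact ha.2
  rw [hbij]
  exact_mod_cast hcyc

lemma count_parkZ [NeZero (m * n + c)] (hn : 0 < n) (hc : 0 < c) (hm : 0 < m) :
    #(Finset.univ.filter (fun g : Fin n → ZMod (m * n + c) => parkZ n c m g))
      = c * (m * n + c) ^ (n - 1) := by
  have h1 : ∑ g : Fin n → ZMod (m * n + c),
      #(Finset.univ.filter (fun s : ZMod (m * n + c) => parkZ n c m (fun i => g i + s)))
      = c * (m * n + c) ^ n := by
    rw [Finset.sum_congr rfl (fun g _ => key_shift hn hc hm g), Finset.sum_const,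
      Finset.card_univ, smul_eq_mul, Fintype.card_fun]
    rw [ZMod.card, Fintype.card_fin]
    ring
  have h2 : ∑ g : Fin n → ZMod (m * n + c),
      #(Finset.univ.filter (fun s : ZMod (m * n + c) => parkZ n c m (fun i => g i + s)))
      = ∑ s : ZMod (m * n + c),
        #(Finset.univ.filter (fun g : Fin n → ZMod (m * n + c) =>
          parkZ n c m (fun i => g i + s))) := by
    simp only [Finset.card_filter]
    exact Finset.sum_comm
  have h3 : ∀ s : ZMod (m * n + c),
      #(Finset.univ.filter (fun g : Fin n → ZMod (m * n + c) => parkZ n c m (fun i => g i + s)))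
        = #(Finset.univ.filter (fun g : Fin n → ZMod (m * n + c) => parkZ n c m g)) := by
    intro s
    apply Finset.card_bij' (fun g _ => fun i => g i + s) (fun h _ => fun i => h i - s)
    · intro g hg
      simp only [Finset.mem_filter, Finset.mem_univ, true_and] at hg ⊢
      exact hg
    · intro h hh
      simp only [Finset.mem_filter, Finset.mem_univ, true_and] at hh ⊢
      have he : (fun i => h i - s + s) = h := by funext i; ring
      rw [he]
      exact hh
    · intro g _
      funext i
      ring
    · intro h _
      funext i
      ring
  have h4 : (m * n + c) * #(Finset.univ.filter
      (fun g : Fin n → ZMod (m * n + c) => parkZ n c m g)) = c * (m * n + c) ^ n := by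
    rw [← h1, h2, Finset.sum_congr rfl (fun s _ => h3 s), Finset.sum_const, Finset.card_univ,
      ZMod.card, smul_eq_mul]
  have hpow : (m * n + c) ^ n = (m * n + c) * (m * n + c) ^ (n - 1) := by
    have he : n - 1 + 1 = n := Nat.succ_pred_eq_of_pos hn
    calc (m * n + c) ^ n = (m * n + c) ^ (n - 1 + 1) := by rw [he]
      _ = (m * n + c) ^ (n - 1) * (m * n + c) := pow_succ _ _
      _ = (m * n + c) * (m * n + c) ^ (n - 1) := by ring
  apply Nat.eq_of_mul_eq_mul_left (show 0 < m * n + c by positivity)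
  rw [h4, hpow]
  ring
end


/-- the number of trapezoidal parking functions
`f : {1,…,n} → ℤ≥0` (whose sorted values satisfy `x_i ≤ m·i + c - 1`) equals
`c(mn + c)^{n-1}`. -/
theorem stmt16 (n : ℕ) (c m : ℕ) (hn : 0 < n) (hc : 0 < c) (hm : 0 < m) :
    {f : Fin n → ℕ | ∃ σ : Equiv.Perm (Fin n),
        Monotone (f ∘ σ) ∧ ∀ i : Fin n, f (σ i) < m * (i : ℕ) + c}.ncard
      = c * (m * n + c) ^ (n - 1) := by
  classical
  haveI : NeZero (m * n + c) := ⟨by omega⟩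
  have h1 : {f : Fin n → ℕ | ∃ σ : Equiv.Perm (Fin n),
      Monotone (f ∘ σ) ∧ ∀ i : Fin n, f (σ i) < m * (i : ℕ) + c}
      = {f : Fin n → ℕ | parkN n c m f} := by
    ext f
    exact parkN_iff f
  rw [h1]
  have hinj : Function.Injective
      (fun (g : Fin n → ZMod (m * n + c)) => fun i => (g i).val) := by
    intro g g' h
    funext i
    exact ZMod.val_injective _ (congrFun h i)
  have h2 : {f : Fin n → ℕ | parkN n c m f}
      = (fun (g : Fin n → ZMod (m * n + c)) => fun i => (g i).val)
          '' {g : Fin n → ZMod (m * n + c) | parkZ n c m g} := by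
    ext f
    constructor
    · intro hf
      have hlt := parkN_lt hn hm hf
      refine ⟨fun i => ((f i : ℕ) : ZMod (m * n + c)), ?_, ?_⟩
      · show parkN n c m (fun i => (((f i : ℕ) : ZMod (m * n + c))).val)
        have he : (fun i => (((f i : ℕ) : ZMod (m * n + c))).val) = f :=
          funext fun i => ZMod.val_cast_of_lt (hlt i)
        rw [he]
        exact hf
      · funext i
        exact ZMod.val_cast_of_lt (hlt i)
    · rintro ⟨g, hg, rfl⟩
      exact hg
  rw [h2, Set.ncard_image_of_injective _ hinj]
  have h3 : {g : Fin n → ZMod (m * n + c) | parkZ n c m g}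
      = ↑(Finset.univ.filter (fun g : Fin n → ZMod (m * n + c) => parkZ n c m g)) := by
    ext g
    simp
  rw [h3, Set.ncard_coe_finset]
  exact count_parkZ hn hc hm
end
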